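/- arXiv:1606.08432 — 11 statements merged into one kernel-verified Lean document; each statement's English description precedes it below -/
import Mathlib

section
/- Let p ≥ 5 be a prime, let r be a non-negative integer, and let k be an integer with 0 ≤ k ≤ p-1. Then C(2rp+2k, rp+k) ≡ C(2r,r)·C(2k,k)·(1 + 2rp·(H_{2k} - H_k)) (mod p²), as a congruence of rational numbers. -/
/-- Congruence of rational numbers modulo `p^m`: `a ≡ b (mod p^m)` means
`a - b = p^m · (s/t)` with `p` not dividing `t`. -/
def ratCongr (p m : ℕ) (a b : ℚ) : Prop :=
  ∃ s t : ℤ, ¬ ((p : ℤ) ∣ t) ∧ (a - b) * (t : ℚ) = (p : ℚ) ^ m * (s : ℚ)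

/-- The `n`-th harmonic number `H_n = ∑_{j=1}^n 1/j`, with `H_0 = 0`. -/
def H (n : ℕ) : ℚ := ∑ j ∈ Finset.range n, 1 / (j + 1 : ℚ)

/-!
Put `X = C(2rp+2k, rp+k)`. Exactly, `X · ((rp+1)⋯(rp+k))² = C(2rp, rp) · (2rp+1)⋯(2rp+2k)`.
Modulo `p²`, Vandermonde's identity and induction give `C(pa, pb) ≡ C(a, b)`, and a rising
product `(m+1)⋯(m+n)` with `p ∣ m` is `n! + m · n! H_n`, where `n! H_n` is the Stirling number
`[n+1, 2]`, an integer. Since `k < p`, `k!` is a unit modulo `p²`; clearing it turns the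
congruence into an identity in `ZMod (p²)`. There `H_{2k}` only occurs through the integer
`(2k)! H_{2k}`, so the case `2k ≥ p`, where `H_{2k}` has a `p` in its denominator, needs no
separate treatment.
-/

theorem ratCongr_of_natCast_mul_eq {p m a u : ℕ} {b : ℚ} {z : ℤ} (hu : ¬ p ∣ u)
    (hb : b * u = z) (h : ((a * u : ℕ) : ZMod (p ^ m)) = z) : ratCongr p m a b := by
  rw [← Int.cast_natCast, ZMod.intCast_eq_intCast_iff_dvd_sub] at h
  obtain ⟨s, hs⟩ := h
  refine ⟨-s, u, by exact_mod_cast hu, ?_⟩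
  have hs' : ((z : ℤ) : ℚ) - (a : ℚ) * u = (p : ℚ) ^ m * s := by exact_mod_cast hs
  push_cast
  linear_combination -hs' - hb

theorem H_eq_harmonic : H = harmonic := by
  funext n
  simp [H, harmonic]

theorem natCast_stirlingFirst_succ_two (n : ℕ) :
    ((n + 1).stirlingFirst 2 : ℚ) = n.factorial * harmonic n := by
  induction n with
  | zero => simp [Nat.stirlingFirst_eq_zero_of_lt]
  | succ n ih =>
    rw [Nat.stirlingFirst_succ_succ (n + 1) 1, Nat.stirlingFirst_one_right, harmonic_succ,
      Nat.factorial_succ]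
    push_cast
    rw [ih]
    field_simp

theorem cast_succ_ascFactorial_of_sq_eq_zero {R : Type*} [CommRing R] (m n : ℕ)
    (hm : (m : R) ^ 2 = 0) :
    ((m + 1).ascFactorial n : R) = n.factorial + m * (n + 1).stirlingFirst 2 := by
  induction n with
  | zero => simp [Nat.stirlingFirst_eq_zero_of_lt]
  | succ n ih =>
    rw [Nat.ascFactorial_succ, Nat.cast_mul, ih, Nat.stirlingFirst_succ_succ (n + 1) 1,
      Nat.stirlingFirst_one_right, Nat.factorial_succ]
    push_cast
    linear_combination ((n + 1).stirlingFirst 2 : R) * hm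

theorem centralBinom_mul_factorial_sq (n : ℕ) :
    n.centralBinom * n.factorial ^ 2 = (2 * n).factorial := by
  rw [Nat.centralBinom_eq_two_mul_choose, sq, ← mul_assoc]
  have := Nat.choose_mul_factorial_mul_factorial (by omega : n ≤ 2 * n)
  rwa [show 2 * n - n = n by omega] at this

theorem centralBinom_add_mul_ascFactorial_sq (n k : ℕ) :
    (n + k).centralBinom * ((n + 1).ascFactorial k) ^ 2 =
      n.centralBinom * (2 * n + 1).ascFactorial (2 * k) := by
  refine Nat.eq_of_mul_eq_mul_right (by positivity : 0 < n.factorial ^ 2) ?_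
  calc (n + k).centralBinom * (n + 1).ascFactorial k ^ 2 * n.factorial ^ 2
      = (n + k).centralBinom * (n.factorial * (n + 1).ascFactorial k) ^ 2 := by ring
    _ = (2 * n).factorial * (2 * n + 1).ascFactorial (2 * k) := by
      rw [Nat.factorial_mul_ascFactorial, Nat.factorial_mul_ascFactorial,
        centralBinom_mul_factorial_sq, mul_add]
    _ = n.centralBinom * (2 * n + 1).ascFactorial (2 * k) * n.factorial ^ 2 := by
      rw [← centralBinom_mul_factorial_sq]; ring

theorem Nat.Prime.dvd_choose_of_dvd_of_not_dvd {p n k : ℕ} (hp : p.Prime) (hn : p ∣ n)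
    (hk : ¬ p ∣ k) : p ∣ n.choose k := by
  obtain _ | j := k
  · exact absurd (dvd_zero p) hk
  obtain _ | m := n
  · simp
  have h : p ∣ (m + 1).choose (j + 1) * (j + 1) :=
    Nat.add_one_mul_choose_eq m j ▸ hn.mul_right _
  exact (hp.dvd_mul.mp h).resolve_right hk

theorem natCast_choose_mul_mul_eq_choose {p : ℕ} (hp : p.Prime) (a b : ℕ) :
    ((p * a).choose (p * b) : ZMod (p ^ 2)) = a.choose b := by
  induction a generalizing b with
  | zero =>
    rcases b with _ | b
    · simp
    · rw [mul_zero, Nat.choose_eq_zero_of_lt (Nat.mul_pos hp.pos b.succ_pos),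
        Nat.choose_zero_succ]
  | succ a ih =>
    obtain _ | b := b
    · simp
    -- In `C(pa + p, pb + p) = ∑ C(pa, i) C(p, j)` every term with `0 < j < p` is a product
    -- of two multiples of `p`, since then `p ∤ i`.
    have hsum : ((p * a + p).choose (p * b + p) : ZMod (p ^ 2)) =
        (p * a).choose (p * (b + 1)) + (p * a).choose (p * b) := by
      rw [Nat.add_choose_eq, Nat.cast_sum, Finset.sum_eq_add_of_mem (p * b + p, 0) (p * b, p)
        (by simp) (by simp) (by simp [hp.ne_zero])]
      · simp [Nat.mul_add_one]
      rintro ⟨i, j⟩ hij hne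
      rw [Finset.HasAntidiagonal.mem_antidiagonal] at hij
      rcases lt_trichotomy j p with hjp | hjp | hjp
      · have hj0 : j ≠ 0 := by rintro rfl; simp_all
        have hi : ¬ p ∣ i := fun hi =>
          have hpj : p ∣ j := (Nat.dvd_add_right hi).mp (hij ▸ ⟨b + 1, by ring⟩)
          absurd (Nat.le_of_dvd (Nat.pos_of_ne_zero hj0) hpj) (by omega)
        rw [ZMod.natCast_eq_zero_iff, pow_two]
        exact mul_dvd_mul (hp.dvd_choose_of_dvd_of_not_dvd (dvd_mul_right p a) hi)
          (hp.dvd_choose_self hj0 hjp)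
      · exact absurd (Prod.ext (by dsimp only; omega) hjp) hne.2
      · simp [Nat.choose_eq_zero_of_lt hjp]
    rw [Nat.mul_add_one p a, Nat.mul_add_one p b, hsum, ih, ih, Nat.choose_succ_succ',
      Nat.cast_add, add_comm]

theorem natCast_centralBinom_mul_add_mul_factorial_sq {p : ℕ} (hp : p.Prime) (r : ℕ) {k : ℕ}
    (hk : k < p) :
    ((r * p + k).centralBinom * k.factorial ^ 2 : ZMod (p ^ 2)) =
      r.centralBinom * ((2 * k).factorial + 2 * (r * p) * ((2 * k + 1).stirlingFirst 2 -
        k.centralBinom * k.factorial * (k + 1).stirlingFirst 2)) := by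
  have hp2 : (p : ZMod (p ^ 2)) ^ 2 = 0 := by exact_mod_cast ZMod.natCast_self (p ^ 2)
  have hx : ((r * p : ℕ) : ZMod (p ^ 2)) ^ 2 = 0 := by
    push_cast; linear_combination (r : ZMod (p ^ 2)) ^ 2 * hp2
  have h2x : ((2 * (r * p) : ℕ) : ZMod (p ^ 2)) ^ 2 = 0 := by
    push_cast; linear_combination 4 * (r : ZMod (p ^ 2)) ^ 2 * hp2
  have hB := cast_succ_ascFactorial_of_sq_eq_zero (r * p) k hx
  have hA := cast_succ_ascFactorial_of_sq_eq_zero (2 * (r * p)) (2 * k) h2x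
  have hC : ((r * p).centralBinom : ZMod (p ^ 2)) = r.centralBinom := by
    rw [Nat.centralBinom_eq_two_mul_choose, Nat.centralBinom_eq_two_mul_choose,
      show 2 * (r * p) = p * (2 * r) by ring, show r * p = p * r by ring]
    exact natCast_choose_mul_mul_eq_choose hp _ _
  have hX := congrArg (Nat.cast : ℕ → ZMod (p ^ 2))
    (centralBinom_add_mul_ascFactorial_sq (r * p) k)
  have hc := congrArg (Nat.cast : ℕ → ZMod (p ^ 2)) (centralBinom_mul_factorial_sq k)
  have hu : IsUnit (k.factorial ^ 2 : ZMod (p ^ 2)) := by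
    have : ¬ p ∣ k.factorial := by rwa [hp.dvd_factorial, not_le]
    exact_mod_cast (ZMod.isUnit_iff_coprime _ _).mpr
      (((hp.coprime_iff_not_dvd).mpr this).symm.pow 2 2)
  refine hu.mul_left_cancel ?_
  push_cast at hX hB hA hC hc hx ⊢
  rw [hB, hA, hC] at hX
  set X := ((r * p + k).centralBinom : ZMod (p ^ 2))
  set u := (k.factorial : ZMod (p ^ 2))
  set S := ((k + 1).stirlingFirst 2 : ZMod (p ^ 2))
  set T := ((2 * k + 1).stirlingFirst 2 : ZMod (p ^ 2))
  set F := ((2 * k).factorial : ZMod (p ^ 2))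
  set C := (r.centralBinom : ZMod (p ^ 2))
  set x := (r : ZMod (p ^ 2)) * p
  -- `(u + x S)² (u - x S)² = u⁴` because `x² = 0`.
  have hX' : u ^ 4 * X = C * (F + 2 * x * T) * (u - x * S) ^ 2 := by
    linear_combination (u - x * S) ^ 2 * hX + X * S ^ 2 * (2 * u ^ 2 - x ^ 2 * S ^ 2) * hx
  linear_combination hX' + 2 * C * x * u * S * hc +
    C * (S ^ 2 * F - 4 * u * S * T + 2 * x * T * S ^ 2) * hx

theorem central_binom_shift_general (p r k : ℕ) (hp : p.Prime) (hk : k ≤ p - 1) :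
    ratCongr p 2 ((2 * r * p + 2 * k).choose (r * p + k) : ℚ)
      (((2 * r).choose r : ℚ) * ((2 * k).choose k : ℚ) *
        (1 + 2 * r * p * (H (2 * k) - H k))) := by
  have hkp : k < p := by have := hp.two_le; omega
  refine ratCongr_of_natCast_mul_eq (u := k.factorial ^ 2)
    (z := r.centralBinom * ((2 * k).factorial + 2 * (r * p) * ((2 * k + 1).stirlingFirst 2 -
      k.centralBinom * k.factorial * (k + 1).stirlingFirst 2 : ℤ))) ?_ ?_ ?_
  · exact fun h => (hp.dvd_factorial.not.mpr (not_le.mpr hkp)) (hp.dvd_of_dvd_pow h)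
  · have hc : (k.centralBinom * k.factorial ^ 2 : ℚ) = (2 * k).factorial := by
      exact_mod_cast centralBinom_mul_factorial_sq k
    rw [H_eq_harmonic, ← Nat.centralBinom_eq_two_mul_choose,
      ← Nat.centralBinom_eq_two_mul_choose]
    push_cast
    rw [natCast_stirlingFirst_succ_two, natCast_stirlingFirst_succ_two]
    linear_combination (r.centralBinom : ℚ) * (1 + 2 * r * p * harmonic (2 * k)) * hc
  · rw [show 2 * r * p + 2 * k = 2 * (r * p + k) by ring, ← Nat.centralBinom_eq_two_mul_choose]
    push_cast
    exact natCast_centralBinom_mul_add_mul_factorial_sq hp r hkp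

theorem central_binom_shift (p r k : ℕ) (hp : p.Prime) (hp5 : 5 ≤ p) (hk : k ≤ p - 1) :
    ratCongr p 2 ((2 * r * p + 2 * k).choose (r * p + k) : ℚ)
      (((2 * r).choose r : ℚ) * ((2 * k).choose k : ℚ) *
        (1 + 2 * r * p * (H (2 * k) - H k))) :=
  central_binom_shift_general p r k hp hk
end

section
/- Let n be an odd positive integer. Then ∑_{k=0}^{n-1} C(2k,k)·( C(n-1,2k) - (-1)^k·C(n-1,k) ) = 0. -/
/-!
Both sums are read off the coefficient of `X ^ m` in `(1 + X + X ^ 2) ^ m`, where `m = n - 1`.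
Expanding `((1 + X) + X ^ 2) ^ m` gives `∑ C(2k,k) C(m,2k)`, while expanding
`((1 + X) ^ 2 - X) ^ m` gives `∑ (-1)^(m-k) C(2k,k) C(m,k)`; for even `m` the signs are `(-1)^k`.
-/

open Polynomial Finset

lemma neg_one_pow_sub_of_even {R : Type*} [Ring R] {m k : ℕ} (hm : Even m) (hk : k ≤ m) :
    (-1 : R) ^ (m - k) = (-1) ^ k := by
  obtain ⟨r, rfl⟩ := hm
  rw [neg_one_pow_eq_pow_mod_two, neg_one_pow_eq_pow_mod_two (n := k)]
  congr 1
  omega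

lemma choose_mul_choose_sub_two_mul {m k : ℕ} (hk : 2 * k ≤ m) :
    m.choose k * (m - k).choose (m - 2 * k) = (2 * k).choose k * m.choose (2 * k) := by
  have hsymm : (m - k).choose (m - 2 * k) = (m - k).choose k := by
    rw [show m - 2 * k = m - k - k by omega, Nat.choose_symm (by omega)]
  have h := Nat.choose_mul (n := m) (k := 2 * k) (s := k) (by omega)
  rw [show 2 * k - k = k by omega] at h
  rw [hsymm, ← h, mul_comm]

lemma coeff_trinomial_pow_self_eq_sum_choose_two_mul (m : ℕ) :
    ((1 + X + X ^ 2 : ℤ[X]) ^ m).coeff m =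
      ∑ k ∈ range (m + 1), ((2 * k).choose k : ℤ) * (m.choose (2 * k) : ℤ) := by
  rw [show (1 + X + X ^ 2 : ℤ[X]) = X ^ 2 + (1 + X) by ring, add_pow, finsetSum_coeff]
  refine sum_congr rfl fun k _ => ?_
  rw [← pow_mul, mul_assoc, ← C_eq_natCast, coeff_X_pow_mul', coeff_mul_C, coeff_one_add_X_pow]
  split_ifs with hk
  · exact_mod_cast (mul_comm _ _).trans (choose_mul_choose_sub_two_mul hk)
  · simp [Nat.choose_eq_zero_of_lt (not_le.1 hk)]

lemma coeff_trinomial_pow_self_eq_sum_neg_one_pow (m : ℕ) :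
    ((1 + X + X ^ 2 : ℤ[X]) ^ m).coeff m =
      ∑ k ∈ range (m + 1), (-1) ^ (m - k) * ((2 * k).choose k : ℤ) * (m.choose k : ℤ) := by
  rw [show (1 + X + X ^ 2 : ℤ[X]) = (1 + X) ^ 2 + -X by ring, add_pow, finsetSum_coeff]
  refine sum_congr rfl fun k hk => ?_
  have hkm : k ≤ m := Nat.lt_succ_iff.1 (mem_range.1 hk)
  have hterm : ((1 + X) ^ 2) ^ k * (-X) ^ (m - k) * (m.choose k : ℤ[X]) =
      C ((-1) ^ (m - k) * (m.choose k : ℤ)) * ((1 + X) ^ (2 * k) * X ^ (m - k)) := by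
    simp only [← pow_mul, map_mul, map_pow, map_neg, map_one, map_natCast]
    ring
  rw [hterm, coeff_C_mul, coeff_mul_X_pow', if_pos (by omega), Nat.sub_sub_self hkm,
    coeff_one_add_X_pow]
  ring

theorem sum_central_binom_identity_general (n : ℕ) (hodd : Odd n) :
    ∑ k ∈ Finset.range n, ((2 * k).choose k : ℤ) *
      (((n - 1).choose (2 * k) : ℤ) - (-1) ^ k * ((n - 1).choose k : ℤ)) = 0 := by
  obtain ⟨j, rfl⟩ := hodd
  simp only [Nat.add_sub_cancel, mul_sub, sum_sub_distrib]
  rw [sub_eq_zero, ← coeff_trinomial_pow_self_eq_sum_choose_two_mul,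
    coeff_trinomial_pow_self_eq_sum_neg_one_pow]
  refine sum_congr rfl fun k hk => ?_
  rw [neg_one_pow_sub_of_even (even_two_mul j) (Nat.lt_succ_iff.1 (mem_range.1 hk))]
  ring

theorem sum_central_binom_identity (n : ℕ) (hn : 0 < n) (hodd : Odd n) :
    ∑ k ∈ Finset.range n, ((2 * k).choose k : ℤ) *
      (((n - 1).choose (2 * k) : ℤ) - (-1) ^ k * ((n - 1).choose k : ℤ)) = 0 :=
  sum_central_binom_identity_general n hodd
end

section
/- Let n be an odd positive integer. Then ∑_{k=0}^{n-1} (C(2k,k)/(k+1))·( C(n-1,2k) - (-1)^k·C(n-1,k) ) = (1/(n+1))·∑_{k=0}^{n} (-1)^k·C(n+1,k)·C(2n-2k,n-k). -/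
/-!
The right-hand side is the Riordan number `R n = ∑ (-1)^(n-k) C(n,k) C_k`, the inverse binomial
transform of the Catalan numbers, and since `n - 1` is even the left-hand side is
`M (n-1) - R (n-1)`, where `M m = ∑ C(m,2k) C_k` is the Motzkin number. So the identity is
`M m = R m + R (m+1)`. By Pascal's rule `R m + R (m+1) = ∑ (-1)^(m-j) C(m,j) C_(j+1)`, and both
sides equal `[x^m] T - [x^(m+2)] T` for `T = (1 + x + x^2)^m`: expand `1 + x + x^2` once as
`(1 + x^2) + x` and once as `(1 + x)^2 - x`, and use `C_k = C(2k,k) - C(2k,k+1)`.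
-/

open Finset Polynomial

theorem catalan_eq_choose_sub_choose (n : ℕ) :
    (catalan n : ℤ) = (2 * n).choose n - (2 * n).choose (n + 1) := by
  have hcat : ((n + 1) * catalan n : ℤ) = (2 * n).choose n := by
    exact_mod_cast (succ_mul_catalan_eq_centralBinom n).trans (Nat.centralBinom_eq_two_mul_choose n)
  have hsucc : ((2 * n).choose (n + 1) * (n + 1) : ℤ) = (2 * n).choose n * n := by
    have := Nat.choose_succ_right_eq (2 * n) n
    rw [show 2 * n - n = n by omega] at this
    exact_mod_cast this
  refine mul_left_cancel₀ (show (n + 1 : ℤ) ≠ 0 by positivity) ?_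
  linear_combination hcat + hsucc

theorem catalan_succ_eq_choose_sub_choose (n : ℕ) :
    (catalan (n + 1) : ℤ) = (2 * n).choose n - (2 * n).choose (n + 2) := by
  have hmid := Nat.choose_symm_half n
  rw [catalan_eq_choose_sub_choose, show 2 * (n + 1) = 2 * n + 1 + 1 by ring,
    Nat.choose_succ_succ (2 * n + 1) n, Nat.choose_succ_succ (2 * n + 1) (n + 1), ← hmid,
    Nat.choose_succ_succ (2 * n) n, Nat.choose_succ_succ (2 * n) (n + 1)]
  push_cast
  ring

theorem sum_range_ite_two_dvd {M : Type*} [AddCommMonoid M] (g : ℕ → M) (m : ℕ)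
    (hg : ∀ j, m < j → g j = 0) :
    ∑ j ∈ range (m + 1), (if 2 ∣ j then g j else 0) = ∑ k ∈ range (m + 1), g (2 * k) := by
  classical
  rw [← sum_filter, ← sum_image (f := g) (g := (2 * ·)) (fun a _ b _ h => by simp at h; omega)]
  refine sum_subset (fun j hj => ?_) (fun j hj hjf => ?_)
  · obtain ⟨hj, ⟨k, rfl⟩⟩ := mem_filter.mp hj
    exact mem_image.mpr ⟨k, by simp at hj ⊢; omega, rfl⟩
  · obtain ⟨k, -, rfl⟩ := mem_image.mp hj
    exact hg _ (by simpa using hjf)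

theorem coeff_add_C_mul_X_pow {R : Type*} [CommSemiring R] (p : R[X]) (c : R) (m s : ℕ) :
    ((p + C c * X) ^ m).coeff (m + s) =
      ∑ j ∈ range (m + 1), m.choose j * c ^ (m - j) * (p ^ j).coeff (j + s) := by
  rw [add_pow, finsetSum_coeff]
  refine sum_congr rfl fun j hj => ?_
  rw [show m + s = (j + s) + (m - j) by simp at hj; omega,
    show p ^ j * (C c * X) ^ (m - j) * (m.choose j : R[X]) =
      C ((m.choose j : R) * c ^ (m - j)) * (p ^ j * X ^ (m - j)) by
        simp only [C_mul, C_pow, C_eq_natCast]; ring,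
    coeff_C_mul, coeff_mul_X_pow]

theorem coeff_X_sq_add_one_pow {R : Type*} [CommSemiring R] (j s : ℕ) :
    ((X ^ 2 + 1 : R[X]) ^ j).coeff s = if 2 ∣ s then (j.choose (s / 2) : R) else 0 := by
  have : (X ^ 2 + 1 : R[X]) ^ j = expand R 2 ((X + 1) ^ j) := by simp
  rw [this, coeff_expand two_pos, coeff_X_add_one_pow]

def motzkin (m : ℕ) : ℕ := ∑ k ∈ range (m + 1), m.choose (2 * k) * catalan k

def riordan (n : ℕ) : ℤ := ∑ k ∈ range (n + 1), (-1) ^ (n - k) * n.choose k * catalan k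

theorem motzkin_eq_coeff_sub_coeff (m : ℕ) :
    (motzkin m : ℤ) =
      ((X ^ 2 + X + 1 : ℤ[X]) ^ m).coeff m - ((X ^ 2 + X + 1 : ℤ[X]) ^ m).coeff (m + 2) := by
  have hsplit : (X ^ 2 + X + 1 : ℤ[X]) = (X ^ 2 + 1) + C 1 * X := by rw [C_1]; ring
  have hm := coeff_add_C_mul_X_pow (X ^ 2 + 1 : ℤ[X]) 1 m 0
  simp only [add_zero] at hm
  rw [hsplit, hm, coeff_add_C_mul_X_pow, ← sum_sub_distrib]
  have hterm : ∀ j ∈ range (m + 1),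
      (m.choose j : ℤ) * 1 ^ (m - j) * ((X ^ 2 + 1 : ℤ[X]) ^ j).coeff j -
          m.choose j * 1 ^ (m - j) * ((X ^ 2 + 1 : ℤ[X]) ^ j).coeff (j + 2) =
        if 2 ∣ j then (m.choose j : ℤ) * (j.choose (j / 2) - j.choose (j / 2 + 1)) else 0 := by
    intro j _
    simp only [coeff_X_sq_add_one_pow, one_pow, mul_one, Nat.dvd_add_self_right,
      Nat.add_div_right j two_pos]
    split_ifs <;> ring
  rw [sum_congr rfl hterm, sum_range_ite_two_dvd _ m
    fun j hj => by rw [Nat.choose_eq_zero_of_lt hj, Nat.cast_zero, zero_mul]]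
  simp only [motzkin, Nat.cast_sum, Nat.cast_mul, catalan_eq_choose_sub_choose,
    Nat.mul_div_cancel_left _ two_pos]

theorem coeff_sub_coeff_eq_sum_catalan_succ (m : ℕ) :
    ((X ^ 2 + X + 1 : ℤ[X]) ^ m).coeff m - ((X ^ 2 + X + 1 : ℤ[X]) ^ m).coeff (m + 2) =
      ∑ j ∈ range (m + 1), (-1 : ℤ) ^ (m - j) * m.choose j * catalan (j + 1) := by
  have hsplit : (X ^ 2 + X + 1 : ℤ[X]) = (X + 1) ^ 2 + C (-1) * X := by rw [C_neg, C_1]; ring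
  have hm := coeff_add_C_mul_X_pow ((X + 1) ^ 2 : ℤ[X]) (-1) m 0
  simp only [add_zero] at hm
  rw [hsplit, hm, coeff_add_C_mul_X_pow, ← sum_sub_distrib]
  refine sum_congr rfl fun j _ => ?_
  rw [← pow_mul, coeff_X_add_one_pow, coeff_X_add_one_pow, catalan_succ_eq_choose_sub_choose]
  ring

theorem motzkin_eq_riordan_add_riordan (m : ℕ) :
    (motzkin m : ℤ) = riordan m + riordan (m + 1) := by
  have hpascal : riordan (m + 1) =
      ∑ i ∈ range (m + 1), (m.choose i : ℤ) * ((-1) ^ (m + 1 - i) * catalan i) +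
        ∑ i ∈ range (m + 1), (m.choose i : ℤ) * ((-1) ^ (m - i) * catalan (i + 1)) := by
    rw [← sum_choose_succ_mul (fun i k => (-1 : ℤ) ^ k * catalan i) m, riordan]
    exact sum_congr rfl fun i _ => by ring
  have hsign : ∑ i ∈ range (m + 1), (m.choose i : ℤ) * ((-1) ^ (m + 1 - i) * catalan i) =
      -riordan m := by
    rw [riordan, ← sum_neg_distrib]
    refine sum_congr rfl fun i hi => ?_
    rw [show m + 1 - i = m - i + 1 by simp at hi; omega, pow_succ]
    ring
  rw [motzkin_eq_coeff_sub_coeff, coeff_sub_coeff_eq_sum_catalan_succ, hpascal, hsign,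
    add_neg_cancel_left]
  exact sum_congr rfl fun i _ => by ring

theorem succ_mul_riordan (n : ℕ) :
    (n + 1 : ℤ) * riordan n =
      ∑ k ∈ range (n + 1), (-1 : ℤ) ^ k * (n + 1).choose k * (2 * n - 2 * k).choose (n - k) := by
  rw [← sum_range_reflect, riordan, mul_sum]
  refine sum_congr rfl fun j hj => ?_
  have hj : j ≤ n := by simpa [Nat.lt_succ_iff] using hj
  have hterm : (n + 1) * n.choose j * catalan j = (n + 1).choose (n - j) * (2 * j).choose j := by
    rw [Nat.add_one_mul_choose_eq,
      Nat.choose_symm_of_eq_add (show n + 1 = (n - j) + (j + 1) by omega), mul_assoc,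
      succ_mul_catalan_eq_centralBinom, Nat.centralBinom_eq_two_mul_choose]
  rw [show n + 1 - 1 - j = n - j by omega, show 2 * n - 2 * (n - j) = 2 * j by omega,
    show n - (n - j) = j by omega]
  have := congrArg (Nat.cast : ℕ → ℤ) hterm
  push_cast at this
  linear_combination (-1 : ℤ) ^ (n - j) * this

theorem cast_catalan_eq_choose_div {K : Type*} [Field K] [CharZero K] (n : ℕ) :
    (catalan n : K) = (2 * n).choose n / (n + 1) := by
  rw [eq_div_iff (Nat.cast_add_one_ne_zero n), mul_comm]
  exact_mod_cast (succ_mul_catalan_eq_centralBinom n).trans (Nat.centralBinom_eq_two_mul_choose n)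

theorem sum_catalan_identity_general (n : ℕ) (hodd : Odd n) :
    ∑ k ∈ Finset.range n, ((2 * k).choose k : ℚ) / (k + 1) *
        (((n - 1).choose (2 * k) : ℚ) - (-1) ^ k * ((n - 1).choose k : ℚ)) =
      (1 / (n + 1 : ℚ)) * ∑ k ∈ Finset.range (n + 1),
        (-1 : ℚ) ^ k * ((n + 1).choose k : ℚ) * ((2 * n - 2 * k).choose (n - k) : ℚ) := by
  obtain ⟨m, rfl⟩ := hodd
  have hrhs : ((2 * m + 1 : ℕ) + 1 : ℚ) * riordan (2 * m + 1) =
      ∑ k ∈ range (2 * m + 1 + 1), (-1 : ℚ) ^ k * (2 * m + 1 + 1).choose k *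
        (2 * (2 * m + 1) - 2 * k).choose (2 * m + 1 - k) := by
    exact_mod_cast succ_mul_riordan (2 * m + 1)
  have hlhs : ∑ k ∈ range (2 * m + 1), ((2 * k).choose k : ℚ) / (k + 1) *
      ((2 * m).choose (2 * k) - (-1) ^ k * (2 * m).choose k) =
        motzkin (2 * m) - riordan (2 * m) := by
    simp only [motzkin, riordan, Nat.cast_sum, Int.cast_sum, ← sum_sub_distrib]
    refine sum_congr rfl fun k hk => ?_
    have hsign : (-1 : ℚ) ^ (2 * m - k) = (-1) ^ k := by
      rw [neg_one_pow_eq_pow_mod_two, show (2 * m - k) % 2 = k % 2 by simp at hk; omega,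
        ← neg_one_pow_eq_pow_mod_two]
    push_cast
    rw [hsign, ← cast_catalan_eq_choose_div]
    ring
  have hrec : (riordan (2 * m + 1) : ℚ) = motzkin (2 * m) - riordan (2 * m) := by
    rw [eq_sub_iff_add_eq']
    exact_mod_cast (motzkin_eq_riordan_add_riordan (2 * m)).symm
  rw [Nat.add_sub_cancel, hlhs, ← hrec, ← hrhs]
  field_simp

theorem sum_catalan_identity (n : ℕ) (hn : 0 < n) (hodd : Odd n) :
    ∑ k ∈ Finset.range n, ((2 * k).choose k : ℚ) / (k + 1) *
        (((n - 1).choose (2 * k) : ℚ) - (-1) ^ k * ((n - 1).choose k : ℚ)) =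
      (1 / (n + 1 : ℚ)) * ∑ k ∈ Finset.range (n + 1),
        (-1 : ℚ) ^ k * ((n + 1).choose k : ℚ) * ((2 * n - 2 * k).choose (n - k) : ℚ) :=
  sum_catalan_identity_general n hodd
end

section
/- Let p ≥ 5 be a prime. Then ∑_{k=0}^{p-1} C(2k,k)·(H_{2k} - H_k) ≡ 0 (mod p), as a congruence of rational numbers. -/
open Finset Polynomial
open scoped Nat

namespace Polynomial

theorem eval_zero_derivative_prod_X_add_C {R ι : Type*} [CommRing R] [DecidableEq ι]
    (s : Finset ι) (b : ι → R) :
    (derivative (∏ i ∈ s, (X + C (b i)))).eval 0 = ∑ i ∈ s, ∏ j ∈ s.erase i, b j := by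
  simp [derivative_prod_finset, eval_finsetSum, eval_prod]

theorem eval_zero_derivative_eq_zero_of_eval_neg {K : Type*} [Field K] [Fintype K]
    (h2 : (2 : K) ≠ 0) {f : K[X]} (hdeg : f.natDegree < Fintype.card K)
    (heven : ∀ x, f.eval (-x) = f.eval x) : (derivative f).eval 0 = 0 := by
  have hcomp : f.comp (-X) = f :=
    eq_of_natDegree_lt_card_of_eval_eq' _ _ univ (fun x _ => by simp [heven])
      (by simpa [natDegree_comp] using hdeg)
  have h := congrArg (fun g => (derivative g).eval 0) hcomp
  simp only [derivative_comp, derivative_neg, derivative_X, neg_mul, one_mul, eval_neg, eval_comp,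
    eval_X, neg_zero] at h
  have : (2 : K) * (derivative f).eval 0 = 0 := by linear_combination -h
  exact (mul_eq_zero.1 this).resolve_left h2

end Polynomial

namespace ZMod

variable {n : ℕ} [NeZero n]

theorem choose_val_sub (x y : ZMod n) : x.val.choose (x - y).val = x.val.choose y.val := by
  by_cases hy : y.val ≤ x.val
  · rw [val_sub hy, Nat.choose_symm hy]
  · have hxy : x.val < (x - y).val := by
      by_contra! h
      have := val_sub h
      rw [sub_sub_cancel] at this
      omega
    rw [Nat.choose_eq_zero_of_lt hxy, Nat.choose_eq_zero_of_lt (not_le.1 hy)]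

theorem sum_val_eq_sum_range {M : Type*} [AddCommMonoid M] (f : ℕ → M) :
    ∑ x : ZMod n, f x.val = ∑ k ∈ range n, f k :=
  Finset.sum_nbij' val (fun k => (k : ZMod n)) (by simp [val_lt]) (by simp) (by simp)
    (fun k hk => val_cast_of_lt (mem_range.1 hk)) (by simp)

end ZMod

theorem ratCongr_sum_div_zero {ι : Type*} {p : ℕ} [Fact p.Prime] (s : Finset ι) (a : ι → ℤ)
    (d : ι → ℕ) (hd : ∀ i ∈ s, ¬ p ∣ d i) (h : ∑ i ∈ s, (a i : ZMod p) / d i = 0) :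
    ratCongr p 1 (∑ i ∈ s, (a i : ℚ) / d i) 0 := by
  classical
  set N : ℤ := ∑ i ∈ s, a i * ∏ j ∈ s.erase i, (d j : ℤ)
  have clear_denominators (K : Type) [Field K] (hK : ∀ i ∈ s, (d i : K) ≠ 0) :
      (∏ i ∈ s, d i : ℕ) * ∑ i ∈ s, (a i : K) / d i = N := by
    rw [mul_sum]
    simp only [N]
    push_cast
    refine sum_congr rfl fun i hi => ?_
    rw [← mul_prod_erase s (fun j => (d j : K)) hi]
    field_simp [hK i hi]
  have hN : (p : ℤ) ∣ N := by
    rw [← ZMod.intCast_zmod_eq_zero_iff_dvd, ← clear_denominators (ZMod p)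
      fun i hi => by rw [Ne, ZMod.natCast_eq_zero_iff]; exact hd i hi, h, mul_zero]
  obtain ⟨M, hM⟩ := hN
  refine ⟨M, ((∏ i ∈ s, d i : ℕ) : ℤ), ?_, ?_⟩
  · rw [Int.natCast_dvd_natCast]
    intro hdvd
    obtain ⟨i, hi, hpi⟩ := (Prime.dvd_finsetProd_iff (Nat.Prime.prime Fact.out) _).1 hdvd
    exact hd i hi hpi
  · rw [sub_zero, pow_one, mul_comm, Int.cast_natCast, clear_denominators ℚ
      fun i hi => Nat.cast_ne_zero.2 fun h0 => hd i hi (by rw [h0]; exact dvd_zero p), hM]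
    push_cast
    ring

-- The numerator of `H (2k) - H k = ∑_{j<k} 1/(k+1+j)` over the denominator `∏_{j<k} (k+1+j)`.
def harmonicSubNumerator (k : ℕ) : ℕ := ∑ i ∈ range k, ∏ j ∈ (range k).erase i, (k + 1 + j)

theorem choose_mul_harmonic_sub (k : ℕ) :
    ((2 * k).choose k : ℚ) * (H (2 * k) - H k) = harmonicSubNumerator k / k ! := by
  have hH : H (2 * k) - H k = ∑ j ∈ range k, 1 / ((k + 1 + j : ℕ) : ℚ) := by
    rw [H, H, two_mul, sum_range_add, add_sub_cancel_left]
    push_cast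
    exact sum_congr rfl fun j _ => by ring_nf
  have hprod : ((2 * k).choose k : ℚ) * k ! = ∏ j ∈ range k, ((k + 1 + j : ℕ) : ℚ) := by
    rw [← Nat.cast_prod, ← Nat.ascFactorial_eq_prod_range, Nat.ascFactorial_eq_factorial_mul_choose,
      two_mul]
    push_cast
    ring
  rw [eq_div_iff (by positivity), mul_right_comm, hprod, hH, mul_sum, harmonicSubNumerator,
    Nat.cast_sum]
  refine sum_congr rfl fun i hi => ?_
  rw [← mul_prod_erase _ _ hi]
  push_cast
  field_simp

section

variable {p : ℕ} [Fact p.Prime]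

theorem Choose.natCast_choose_eq_choose_mod (n : ℕ) {k : ℕ} (hk : k < p) :
    (n.choose k : ZMod p) = ((n % p).choose k : ZMod p) := by
  simpa [Nat.mod_eq_of_lt hk, Nat.div_eq_of_lt hk] using
    (ZMod.natCast_eq_natCast_iff _ _ _).2 (Choose.choose_modEq_choose_mod_mul_choose_div_nat
      (n := n) (k := k) (p := p))

theorem sum_range_choose_two_mul_add_val (a : ZMod p) :
    ∑ k ∈ range p, ((2 * k + a.val).choose k : ZMod p) =
      ∑ x : ZMod p, ((2 * x + a).val.choose x.val : ZMod p) := by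
  rw [← ZMod.sum_val_eq_sum_range]
  refine sum_congr rfl fun x _ => ?_
  rw [Choose.natCast_choose_eq_choose_mod _ (ZMod.val_lt x), ← ZMod.val_natCast]
  simp

theorem sum_range_choose_two_mul_add_val_neg (a : ZMod p) :
    ∑ k ∈ range p, ((2 * k + (-a).val).choose k : ZMod p) =
      ∑ k ∈ range p, ((2 * k + a.val).choose k : ZMod p) := by
  rw [sum_range_choose_two_mul_add_val, sum_range_choose_two_mul_add_val]
  refine (Fintype.sum_equiv (Equiv.addRight a) _ _ fun x => ?_).symm
  rw [Equiv.coe_addRight, ← ZMod.choose_val_sub (2 * x + a) x]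
  ring_nf

noncomputable def binomSumPoly (p : ℕ) : (ZMod p)[X] :=
  ∑ k ∈ range p, C ((k ! : ZMod p)⁻¹) * ∏ j ∈ range k, (X + C ((k + 1 + j : ℕ) : ZMod p))

theorem natDegree_binomSumPoly_lt : (binomSumPoly p).natDegree < p := by
  have hp := (Fact.out : p.Prime).pos
  refine lt_of_le_of_lt (natDegree_sum_le_of_forall_le _ _ (n := p - 1) fun k hk => ?_) (by omega)
  refine (natDegree_C_mul_le _ _).trans ((natDegree_prod_le _ _).trans ?_)
  simp only [natDegree_X_add_C, sum_const, card_range, smul_eq_mul, mul_one]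
  have := mem_range.1 hk
  omega

theorem eval_natCast_binomSumPoly (t : ℕ) :
    (binomSumPoly p).eval (t : ZMod p) = ∑ k ∈ range p, ((2 * k + t).choose k : ZMod p) := by
  simp only [binomSumPoly, eval_finsetSum, eval_mul, eval_C, eval_prod, eval_add, eval_X]
  refine sum_congr rfl fun k hk => ?_
  have hk : (k ! : ZMod p) ≠ 0 := by
    rw [Ne, ZMod.natCast_eq_zero_iff, Nat.Prime.dvd_factorial Fact.out]
    exact not_le.2 (mem_range.1 hk)
  have hprod : ∏ j ∈ range k, (t + k + 1 + j) = k ! * (2 * k + t).choose k := by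
    rw [← Nat.ascFactorial_eq_prod_range, Nat.ascFactorial_eq_factorial_mul_choose, two_mul,
      add_comm (k + k), add_assoc]
  rw [inv_mul_eq_iff_eq_mul₀ hk, ← Nat.cast_mul, ← hprod]
  push_cast
  exact prod_congr rfl fun j _ => by ring

theorem eval_neg_binomSumPoly (a : ZMod p) :
    (binomSumPoly p).eval (-a) = (binomSumPoly p).eval a := by
  have eval_eq (b : ZMod p) := ZMod.natCast_zmod_val b ▸ eval_natCast_binomSumPoly (p := p) b.val
  rw [eval_eq, eval_eq, sum_range_choose_two_mul_add_val_neg]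

theorem eval_zero_derivative_binomSumPoly :
    (derivative (binomSumPoly p)).eval 0 =
      ∑ k ∈ range p, (harmonicSubNumerator k : ZMod p) / (k ! : ZMod p) := by
  simp only [binomSumPoly, derivative_sum, derivative_C_mul, eval_finsetSum, eval_mul, eval_C,
    eval_zero_derivative_prod_X_add_C]
  push_cast
  exact sum_congr rfl fun k _ => by rw [div_eq_inv_mul, harmonicSubNumerator]; push_cast; rfl

end

theorem sum_central_binom_harmonic (p : ℕ) (hp : p.Prime) (hp5 : 5 ≤ p) :
    ratCongr p 1 (∑ k ∈ Finset.range p, ((2 * k).choose k : ℚ) * (H (2 * k) - H k)) 0 := by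
  have := Fact.mk hp
  have h2 : (2 : ZMod p) ≠ 0 := by
    rw [Ne, ← Nat.cast_ofNat, ZMod.natCast_eq_zero_iff]
    exact fun h => by have := Nat.le_of_dvd two_pos h; omega
  simp_rw [choose_mul_harmonic_sub, ← Int.cast_natCast (R := ℚ) (harmonicSubNumerator _)]
  refine ratCongr_sum_div_zero _ _ _ (fun k hk => ?_) ?_
  · rw [hp.dvd_factorial, not_le]
    exact mem_range.1 hk
  · simp_rw [Int.cast_natCast, ← eval_zero_derivative_binomSumPoly]
    exact eval_zero_derivative_eq_zero_of_eval_neg h2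
      (by simpa using natDegree_binomSumPoly_lt) eval_neg_binomSumPoly
end

section
/- Let p ≥ 5 be a prime and r a non-negative integer. Then ∑_{k=rp}^{(r+1)p-1} C(2k,k) ≡ (p/3)·C(2r,r) (mod p²), where (p/3) denotes the Legendre symbol of p modulo 3. -/
/-!
Put `P_n = ∑_{j<n} X^(n-1-j) (X+1)^(2j)`, so that `(X²+X+1) P_n = (X+1)^(2n) - X^n` and the
coefficient of `X^(n-1)` in `P_n` is `∑_{k<n} C(2k,k)`. For a prime `p ≥ 5`, a primitive cube
root of unity shows that `X²+X+1` divides `X^(2p)+X^p+1 = (X²+X+1) A` and `(X+1)^p - 1 - X^p`;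
the quotient of the latter vanishes mod `p`, so `(X+1)^p = X^p + 1 + p (X²+X+1) F` with
`deg F < p - 1`. Raising this to the power `2N` and cancelling `X²+X+1` gives
`P_{pN} ≡ A · P_N(X^p) + p F · Q(X^p) (mod p²)`. At `X^(pN-1)` only the coefficient of `X^(p-1)`
in `A` survives from the first term, and it equals `(p/3)` because the low coefficients of `A`
run through `1, -1, 0` periodically; the `F`-term contributes nothing. Hence
`∑_{k<pN} C(2k,k) ≡ (p/3) ∑_{k<N} C(2k,k) (mod p²)`, and the block sum is a difference of two
such sums.
-/

/-- The Legendre symbol `(p/3)`: `1` if `p ≡ 1 (mod 3)` and `-1` if `p ≡ 2 (mod 3)`. -/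
def leg3 (p : ℕ) : ℤ := if p % 3 = 1 then 1 else -1

open Polynomial Finset

section CubeRoot

variable {R : Type*} [CommRing R] {ω : R}

theorem pow_three_eq_one_of_sq_add_add_one (h : ω ^ 2 + ω + 1 = 0) : ω ^ 3 = 1 := by
  linear_combination (ω - 1) * h

theorem pow_sq_add_pow_add_one_eq_zero (h : ω ^ 2 + ω + 1 = 0) {n : ℕ} (hn : ¬ 3 ∣ n) :
    (ω ^ n) ^ 2 + ω ^ n + 1 = 0 := by
  have hω3 := pow_three_eq_one_of_sq_add_add_one h
  have hmod : ω ^ n = ω ^ (n % 3) := by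
    conv_lhs => rw [← Nat.div_add_mod n 3, pow_add, pow_mul, hω3, one_pow, one_mul]
  rw [hmod]
  rcases (by omega : n % 3 = 1 ∨ n % 3 = 2) with h1 | h2
  · rw [h1]; linear_combination h
  · rw [h2]; linear_combination ω * hω3 + h

theorem add_one_pow_sub_one_sub_pow_eq_zero (h : ω ^ 2 + ω + 1 = 0) {n : ℕ} (hodd : Odd n)
    (hn : ¬ 3 ∣ n) : (ω + 1) ^ n - 1 - ω ^ n = 0 := by
  have hneg : ω + 1 = -ω ^ 2 := by linear_combination h
  rw [hneg, hodd.neg_pow, ← pow_mul, mul_comm, pow_mul]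
  linear_combination -pow_sq_add_pow_add_one_eq_zero h hn

end CubeRoot

namespace Polynomial

theorem coeff_mul_expand_of_natDegree_lt {R : Type*} [CommSemiring R] {p s : ℕ}
    {A : R[X]} (hs : s < p) (hA : A.natDegree < p + s) (Q : R[X]) (K : ℕ) :
    (A * expand R p Q).coeff (p * K + s) = A.coeff s * Q.coeff K := by
  have hp : 0 < p := by omega
  rw [coeff_mul, Finset.sum_eq_single (s, p * K)]
  · rw [coeff_expand hp, if_pos (dvd_mul_right p K), Nat.mul_div_cancel_left K hp]
  · rintro ⟨i, j⟩ hij hne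
    rw [HasAntidiagonal.mem_antidiagonal] at hij
    rw [coeff_expand hp]
    split_ifs with hdvd
    · obtain ⟨b, rfl⟩ := hdvd
      have hb : b < K := by
        rcases lt_trichotomy b K with hb | rfl | hb
        · exact hb
        · exact absurd (by rw [Prod.mk.injEq]; omega) hne
        · nlinarith
      have : p + s ≤ i := by nlinarith
      rw [coeff_eq_zero_of_natDegree_lt (by omega), zero_mul]
    · rw [mul_zero]
  · simp [add_comm]

theorem monic_trinomial {R : Type*} [Semiring R] [Nontrivial R] :
    (X ^ 2 + X + 1 : R[X]).Monic := by
  monicity!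

theorem natDegree_trinomial {R : Type*} [Semiring R] [Nontrivial R] :
    (X ^ 2 + X + 1 : R[X]).natDegree = 2 := by
  compute_degree!

section Trinomial

variable {R : Type*} [CommRing R]

theorem coeff_trinomial_mul_add_two (A : R[X]) (i : ℕ) :
    ((X ^ 2 + X + 1) * A).coeff (i + 2) = A.coeff i + A.coeff (i + 1) + A.coeff (i + 2) := by
  simp only [add_mul, one_mul, coeff_add, coeff_X_pow_mul, coeff_X_mul]

theorem coeff_trinomial_mul_zero (A : R[X]) :
    ((X ^ 2 + X + 1) * A).coeff 0 = A.coeff 0 := by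
  simp [add_mul]

theorem coeff_trinomial_mul_one (A : R[X]) :
    ((X ^ 2 + X + 1) * A).coeff 1 = A.coeff 0 + A.coeff 1 := by
  simp [add_mul, coeff_X_mul, coeff_X_pow_mul']

theorem coeff_eq_coeff_mod_three_of_trinomial_mul {A : R[X]} {n : ℕ}
    (hB : ∀ i, 0 < i → i < n → ((X ^ 2 + X + 1) * A).coeff i = 0) {i : ℕ} (hi : i < n) :
    A.coeff i = A.coeff (i % 3) := by
  induction i using Nat.strong_induction_on with
  | _ i ih =>
    obtain hi3 | ⟨j, rfl⟩ : i < 3 ∨ ∃ j, i = j + 3 := by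
      rcases Nat.lt_or_ge i 3 with h | h
      · exact .inl h
      · exact .inr ⟨i - 3, by omega⟩
    · rw [Nat.mod_eq_of_lt hi3]
    · have h1 := coeff_trinomial_mul_add_two A (j + 1)
      have h0 := coeff_trinomial_mul_add_two A j
      rw [hB _ (by omega) hi] at h1
      rw [hB _ (by omega) (by omega)] at h0
      rw [Nat.add_mod_right, ← ih j (by omega) (by omega)]
      linear_combination h0 - h1

theorem trinomial_dvd_iff_aeval_root {g : R[X]} :
    X ^ 2 + X + 1 ∣ g ↔ aeval (AdjoinRoot.root (X ^ 2 + X + 1 : R[X])) g = 0 := by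
  rw [AdjoinRoot.aeval_eq, AdjoinRoot.mk_eq_zero]

theorem root_trinomial_sq_add_add_one :
    AdjoinRoot.root (X ^ 2 + X + 1 : R[X]) ^ 2 + AdjoinRoot.root (X ^ 2 + X + 1 : R[X]) + 1 =
      0 := by
  simpa only [map_add, map_pow, aeval_X, map_one] using
    (trinomial_dvd_iff_aeval_root (R := R)).mp dvd_rfl

theorem trinomial_dvd_expand {n : ℕ} (hn : ¬ 3 ∣ n) :
    X ^ 2 + X + 1 ∣ expand R n (X ^ 2 + X + 1) := by
  rw [trinomial_dvd_iff_aeval_root, expand_aeval]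
  simpa using pow_sq_add_pow_add_one_eq_zero root_trinomial_sq_add_add_one hn

theorem trinomial_dvd_add_one_pow_sub {n : ℕ} (hodd : Odd n) (hn : ¬ 3 ∣ n) :
    (X ^ 2 + X + 1 : R[X]) ∣ (X + 1) ^ n - 1 - X ^ n := by
  rw [trinomial_dvd_iff_aeval_root]
  simpa using add_one_pow_sub_one_sub_pow_eq_zero root_trinomial_sq_add_add_one hodd hn

end Trinomial

theorem C_dvd_of_map_zmod_eq_zero {p : ℕ} {H : ℤ[X]}
    (h : H.map (Int.castRingHom (ZMod p)) = 0) : C (p : ℤ) ∣ H := by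
  rw [C_dvd_iff_dvd_coeff]
  intro i
  rw [← ZMod.intCast_zmod_eq_zero_iff_dvd, ← eq_intCast (Int.castRingHom (ZMod p)), ← coeff_map,
    h, coeff_zero]

theorem degree_add_one_pow_sub_lt {R : Type*} [CommRing R] [Nontrivial R] {n : ℕ} (hn : 0 < n) :
    ((X + 1 : R[X]) ^ n - 1 - X ^ n).degree < (n : WithBot ℕ) := by
  have hmonic : ((X + 1 : R[X]) ^ n).Monic := by monicity!
  have hmonic' : (X ^ n + 1 : R[X]).Monic := by simpa using monic_X_pow_add_C (1 : R) hn.ne'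
  have hdeg : ((X + 1 : R[X]) ^ n).degree = n := by compute_degree!
  rw [sub_sub, add_comm 1, ← hdeg]
  refine degree_sub_lt_left ?_ hmonic.ne_zero ?_
  · rw [hdeg, ← C_1, degree_X_pow_add_C hn]
  · rw [hmonic.leadingCoeff, hmonic'.leadingCoeff]

end Polynomial

theorem Nat.Prime.not_three_dvd {p : ℕ} (hp : p.Prime) (hp5 : 5 ≤ p) : ¬ 3 ∣ p := fun h =>
  absurd ((Nat.prime_dvd_prime_iff_eq Nat.prime_three hp).mp h) (by omega)

theorem exists_expand_trinomial_eq {p : ℕ} (hp : p.Prime) (hp5 : 5 ≤ p) :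
    ∃ A : ℤ[X], expand ℤ p (X ^ 2 + X + 1) = (X ^ 2 + X + 1) * A ∧
      A.coeff (p - 1) = leg3 p ∧ A.natDegree < p + (p - 1) := by
  obtain ⟨A, hA⟩ := trinomial_dvd_expand (R := ℤ) (hp.not_three_dvd hp5)
  have hcoeff (i : ℕ) (hi : i < p) : ((X ^ 2 + X + 1) * A).coeff i = if i = 0 then 1 else 0 := by
    rw [← hA, coeff_expand hp.pos]
    by_cases h0 : i = 0
    · simp [h0]
    · rw [if_neg h0, if_neg (Nat.not_dvd_of_pos_of_lt (by omega) hi)]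
  have hper (i : ℕ) (hi : i < p) := coeff_eq_coeff_mod_three_of_trinomial_mul
    (fun j hj hjp => (hcoeff j hjp).trans (if_neg hj.ne')) hi
  have hA0 : A.coeff 0 = 1 := by
    rw [← coeff_trinomial_mul_zero, hcoeff 0 hp.pos, if_pos rfl]
  have hA1 : A.coeff 1 = -1 := by
    have h := coeff_trinomial_mul_one A
    rw [hcoeff 1 (by omega), if_neg one_ne_zero, hA0] at h
    linear_combination -h
  refine ⟨A, hA, ?_, ?_⟩
  · rw [hper (p - 1) (by omega), leg3]
    have := hp.not_three_dvd hp5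
    rcases (by omega : p % 3 = 1 ∨ p % 3 = 2) with h | h
    · rw [if_pos h, show (p - 1) % 3 = 0 by omega, hA0]
    · rw [if_neg (by omega), show (p - 1) % 3 = 1 by omega, hA1]
  · have hA0' : A ≠ 0 := fun h => by simp [h] at hA0
    have hdeg := congr_arg natDegree hA
    rw [natDegree_expand, natDegree_mul monic_trinomial.ne_zero hA0', natDegree_trinomial] at hdeg
    omega

theorem exists_add_one_pow_eq {p : ℕ} (hp : p.Prime) (hp5 : 5 ≤ p) :
    ∃ F : ℤ[X], (X + 1) ^ p = X ^ p + 1 + C (p : ℤ) * ((X ^ 2 + X + 1) * F) ∧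
      F.natDegree < p - 1 := by
  have : Fact p.Prime := ⟨hp⟩
  obtain ⟨H, hH⟩ := trinomial_dvd_add_one_pow_sub (R := ℤ) (hp.odd_of_ne_two (by omega))
    (hp.not_three_dvd hp5)
  have hmap : H.map (Int.castRingHom (ZMod p)) = 0 := by
    have h := congr_arg (map (Int.castRingHom (ZMod p))) hH
    simp only [Polynomial.map_sub, Polynomial.map_pow, Polynomial.map_add, Polynomial.map_mul,
      Polynomial.map_X, Polynomial.map_one, add_pow_char, one_pow, add_sub_cancel_right,
      sub_self] at h
    exact (mul_eq_zero.mp h.symm).resolve_left monic_trinomial.ne_zero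
  obtain ⟨F, rfl⟩ := C_dvd_of_map_zmod_eq_zero hmap
  refine ⟨F, by linear_combination hH, ?_⟩
  rcases eq_or_ne F 0 with rfl | hF
  · simp only [natDegree_zero]; omega
  have hp0 : (p : ℤ) ≠ 0 := by exact_mod_cast hp.ne_zero
  have hpF : C (p : ℤ) * F ≠ 0 := mul_ne_zero (C_ne_zero.mpr hp0) hF
  have hdeg := degree_add_one_pow_sub_lt (R := ℤ) hp.pos
  rw [hH, ← natDegree_lt_iff_degree_lt (mul_ne_zero monic_trinomial.ne_zero hpF),
    natDegree_mul monic_trinomial.ne_zero hpF, natDegree_C_mul hp0, natDegree_trinomial] at hdeg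
  omega

noncomputable def centralBinomSum (n : ℕ) : ℤ := ∑ k ∈ range n, (k.centralBinom : ℤ)

noncomputable def centralBinomPoly : ℕ → ℤ[X]
  | 0 => 0
  | n + 1 => (X + 1) ^ (2 * n) + X * centralBinomPoly n

theorem trinomial_mul_centralBinomPoly (n : ℕ) :
    (X ^ 2 + X + 1) * centralBinomPoly n = (X + 1) ^ (2 * n) - X ^ n := by
  induction n with
  | zero => simp [centralBinomPoly]
  | succ n ih =>
    rw [centralBinomPoly, mul_add, mul_left_comm, ih]
    ring

theorem coeff_centralBinomPoly (n : ℕ) :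
    (centralBinomPoly (n + 1)).coeff n = centralBinomSum (n + 1) := by
  induction n with
  | zero => simp [centralBinomPoly, centralBinomSum]
  | succ n ih =>
    rw [centralBinomPoly, coeff_add, coeff_X_mul, ih, coeff_X_add_one_pow, centralBinomSum,
      centralBinomSum, sum_range_succ _ (n + 1), add_comm]
    rfl

theorem exists_centralBinomPoly_mul_eq {p : ℕ} {A F : ℤ[X]}
    (hA : expand ℤ p (X ^ 2 + X + 1) = (X ^ 2 + X + 1) * A)
    (hF : (X + 1) ^ p = X ^ p + 1 + C (p : ℤ) * ((X ^ 2 + X + 1) * F)) (N : ℕ) :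
    ∃ Q R : ℤ[X], centralBinomPoly (p * N) =
      A * expand ℤ p (centralBinomPoly N) + C (p : ℤ) * (F * expand ℤ p Q) +
        C (p : ℤ) ^ 2 * R := by
  obtain ⟨k, hk⟩ :=
    binomExpansion (X ^ (2 * N) : ℤ[X][X]) (X ^ p + 1) (C (p : ℤ) * ((X ^ 2 + X + 1) * F))
  simp only [eval_pow, eval_X, derivative_X_pow, eval_mul, eval_C] at hk
  have hexpand : (X ^ 2 + X + 1) * A * expand ℤ p (centralBinomPoly N) =
      (X ^ p + 1) ^ (2 * N) - (X ^ p) ^ N := by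
    rw [← hA, ← map_mul, trinomial_mul_centralBinomPoly]
    simp
  refine ⟨((2 * N : ℕ) : ℤ[X]) * (X + 1) ^ (2 * N - 1), (X ^ 2 + X + 1) * F ^ 2 * k, ?_⟩
  apply mul_left_cancel₀ (monic_trinomial (R := ℤ)).ne_zero
  rw [trinomial_mul_centralBinomPoly, show 2 * (p * N) = p * (2 * N) by ring,
    pow_mul _ p, pow_mul X p, hF, hk]
  simp only [map_mul, map_natCast, map_pow, map_add, expand_X, map_one]
  linear_combination -hexpand

theorem centralBinomSum_mul_modEq {p : ℕ} (hp : p.Prime) (hp5 : 5 ≤ p) (N : ℕ) :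
    centralBinomSum (p * N) ≡ leg3 p * centralBinomSum N [ZMOD (p : ℤ) ^ 2] := by
  cases N with
  | zero => simp [centralBinomSum]
  | succ K =>
    obtain ⟨A, hA, hAcoeff, hAdeg⟩ := exists_expand_trinomial_eq hp hp5
    obtain ⟨F, hF, hFdeg⟩ := exists_add_one_pow_eq hp hp5
    obtain ⟨Q, R, hPQR⟩ := exists_centralBinomPoly_mul_eq hA hF (K + 1)
    have hs : p - 1 < p := by omega
    have hcoeff := congr_arg (coeff · (p * K + (p - 1))) hPQR
    simp only [coeff_add, coeff_C_mul, ← C_pow, coeff_mul_expand_of_natDegree_lt hs hAdeg,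
      coeff_mul_expand_of_natDegree_lt hs (by omega : F.natDegree < p + (p - 1)),
      coeff_eq_zero_of_natDegree_lt hFdeg, hAcoeff, coeff_centralBinomPoly, zero_mul, mul_zero,
      add_zero] at hcoeff
    have hidx : p * (K + 1) = p * K + (p - 1) + 1 := by rw [mul_add_one]; omega
    rw [hidx, coeff_centralBinomPoly, ← hidx] at hcoeff
    rw [hcoeff]
    exact Int.add_mul_emod_self_left _ _ _

theorem block_sum_central_binom (p r : ℕ) (hp : p.Prime) (hp5 : 5 ≤ p) :
    ∑ k ∈ Finset.Ico (r * p) ((r + 1) * p), ((2 * k).choose k : ℤ) ≡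
      leg3 p * ((2 * r).choose r : ℤ) [ZMOD (p : ℤ) ^ 2] := by
  have hsum : ∑ k ∈ Ico (r * p) ((r + 1) * p), ((2 * k).choose k : ℤ) =
      centralBinomSum (p * (r + 1)) - centralBinomSum (p * r) := by
    rw [mul_comm p, mul_comm p]
    exact sum_Ico_eq_sub _ (Nat.mul_le_mul_right p r.le_succ)
  have hstep : centralBinomSum (r + 1) - centralBinomSum r = ((2 * r).choose r : ℤ) := by
    rw [centralBinomSum, sum_range_succ, ← centralBinomSum, add_sub_cancel_left]
    rfl
  rw [hsum, ← hstep, mul_sub]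
  exact (centralBinomSum_mul_modEq hp hp5 (r + 1)).sub (centralBinomSum_mul_modEq hp hp5 r)
end

section
/- Let p ≥ 5 be a prime with p ≡ 1 (mod 3) and let r be a non-negative integer. Then ∑_{k=rp}^{(r+1)p-1} C(2k,k)/(k+1) ≡ C(2r,r)/(r+1) (mod p²), as a congruence of rational numbers (in fact of integers, since both sides are integers). -/
/-!
By an identity of Pan and Sun, `∑_{k<n} C_k = ∑_{i=0}^{n} w(i) C(2n, n+i) - C(2n, n)`, where
`w(i) = 1, 1, -2` according as `i ≡ 0, 1, 2 (mod 3)`. For `n = mp` write `i = ap + b` with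
`0 ≤ b < p`. Modulo `p²`, `C(2mp, (m+a)p) ≡ C(2m, m+a)`, and for `0 < b < p` Lucas' theorem
gives `C(2mp, (m+a)p + b) ≡ (m-a) C(2m, m+a) C(p, b)`. Since
`w(i) = -2 Re ω^(i+1)` for a primitive cube root of unity `ω` and `(1+ω)^p = 1+ω` when
`p ≡ 1 (mod 6)`, the sum `∑_{0<b<p} w(a+b) C(p, b)` vanishes exactly. Hence
`∑_{k<mp} C_k ≡ ∑_{k<m} C_k (mod p²)`, and the block sum is the difference of two such sums.
-/

open Finset

namespace BlockSumCatalan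

lemma sum_range_mul {M : Type*} [AddCommMonoid M] (g : ℕ → M) (m n : ℕ) :
    ∑ j ∈ range (m * n), g j = ∑ a ∈ range m, ∑ b ∈ range n, g (a * n + b) := by
  induction m with
  | zero => simp
  | succ m ih => rw [add_one_mul, sum_range_add, ih, sum_range_succ]

def weight (j : ℕ) : ℤ := if j % 3 = 2 then -2 else 1

lemma weight_mod (j : ℕ) : weight (j % 3) = weight j := by
  simp [weight]

lemma weight_add_three (j : ℕ) : weight (j + 3) = weight j := by
  rw [← weight_mod, Nat.add_mod_right, weight_mod]

lemma weight_add_weight_add_weight (j : ℕ) :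
    weight j + weight (j + 1) + weight (j + 2) = 0 := by
  simp only [weight]
  split_ifs <;> omega

lemma weight_mul_add {p : ℕ} (hp3 : p % 3 = 1) (a b : ℕ) :
    weight (a * p + b) = weight (a + b) := by
  rw [← weight_mod, ← weight_mod (a + b)]
  congr 1
  rw [Nat.add_mod, Nat.mul_mod, hp3, mul_one, Nat.mod_mod, ← Nat.add_mod]

def rowSum (m c : ℕ) : ℤ := ∑ b ∈ range (m + 1), weight (c + b) * m.choose b

lemma rowSum_succ (m c : ℕ) : rowSum (m + 1) c = rowSum m c + rowSum m (c + 1) := by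
  have h := sum_range_succ' (fun b => weight (c + b) * (m.choose b : ℤ)) (m + 1)
  rw [sum_range_succ, Nat.choose_succ_self] at h
  simp only [rowSum, sum_range_succ' _ (m + 1), Nat.choose_succ_succ', Nat.cast_add, mul_add,
    sum_add_distrib, Nat.choose_zero_right, ← add_assoc, add_right_comm c 1] at h ⊢
  linear_combination -h

lemma rowSum_add_two (m c : ℕ) : rowSum (m + 2) c = rowSum m (c + 1) := by
  have h : rowSum m c + rowSum m (c + 1) + rowSum m (c + 2) = 0 := by
    simp only [rowSum, ← sum_add_distrib, ← add_mul]
    refine sum_eq_zero fun b _ => ?_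
    rw [add_right_comm c 1, add_right_comm c 2, weight_add_weight_add_weight, zero_mul]
  rw [rowSum_succ, rowSum_succ, rowSum_succ]
  linear_combination h

lemma rowSum_add_six (m c : ℕ) : rowSum (m + 6) c = rowSum m c := by
  rw [rowSum_add_two, rowSum_add_two, rowSum_add_two]
  simp only [rowSum, add_right_comm c 3, weight_add_three]

lemma sum_Ico_weight_mul_choose {n : ℕ} (hn : n % 6 = 1) (c : ℕ) :
    ∑ b ∈ Ico 1 n, weight (c + b) * n.choose b = 0 := by
  have hrow : rowSum n c = rowSum 1 c := by
    rw [← Nat.div_add_mod n 6, hn]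
    induction n / 6 with
    | zero => rfl
    | succ k ih => rwa [mul_add_one, add_right_comm, rowSum_add_six]
  have hsplit : rowSum n c =
      weight c + ∑ b ∈ Ico 1 n, weight (c + b) * n.choose b + weight (c + n) := by
    rw [rowSum, range_eq_Ico, sum_eq_sum_Ico_succ_bot (by omega), sum_Ico_succ_top (by omega)]
    simp [add_assoc]
  have hcn : weight (c + n) = weight (c + 1) := by
    rw [← weight_mod, ← weight_mod (c + 1)]
    congr 1
    omega
  rw [hsplit, hcn] at hrow
  simp only [rowSum, sum_range_succ, range_zero, sum_empty, add_zero, Nat.choose_zero_right,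
    Nat.choose_self, Nat.cast_one, mul_one, zero_add] at hrow
  linarith

lemma sum_range_weight_mul_add_add (f : ℕ → ℤ) (N : ℕ) :
    ∑ j ∈ range N, weight (j + 1) * (f j + f (j + 1) + f (j + 2)) =
      f 0 - f 1 - weight (N + 1) * f N + weight N * f (N + 1) := by
  induction N with
  | zero => simp [weight]
  | succ N ih =>
    rw [sum_range_succ, ih]
    linear_combination f (N + 1) * weight_add_weight_add_weight N

lemma catalan_eq_choose_sub_choose (n : ℕ) :
    (catalan n : ℤ) = (2 * n).choose n - (2 * n).choose (n + 1) := by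
  have hcat : ((n + 1 : ℕ) : ℤ) * catalan n = (2 * n).choose n := by
    rw [← Nat.cast_mul, succ_mul_catalan_eq_centralBinom, Nat.centralBinom_eq_two_mul_choose]
  have hsucc : ((2 * n).choose (n + 1) : ℤ) * (n + 1) = (2 * n).choose n * n := by
    have h := Nat.choose_succ_right_eq (2 * n) n
    rw [show 2 * n - n = n by omega] at h
    exact_mod_cast h
  refine mul_left_cancel₀ (by positivity : ((n + 1 : ℕ) : ℤ) ≠ 0) ?_
  push_cast at hcat ⊢
  linear_combination hcat + hsucc

lemma catalan_eq_choose_div (k : ℕ) : (catalan k : ℚ) = (2 * k).choose k / (k + 1) := by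
  rw [eq_div_iff (by positivity), ← Nat.centralBinom_eq_two_mul_choose,
    ← succ_mul_catalan_eq_centralBinom]
  push_cast
  ring

def upperWeightedSum (n : ℕ) : ℤ := ∑ i ∈ range (n + 1), weight i * (2 * n).choose (n + i)

lemma upperWeightedSum_sub_choose (n : ℕ) :
    upperWeightedSum n - (2 * n).choose n =
      ∑ j ∈ range n, weight (j + 1) * (2 * n).choose (n + (j + 1)) := by
  simp [upperWeightedSum, sum_range_succ', weight]

theorem sum_range_catalan (n : ℕ) :
    ∑ k ∈ range n, (catalan k : ℤ) = upperWeightedSum n - (2 * n).choose n := by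
  induction n with
  | zero => simp [upperWeightedSum, weight]
  | succ n ih =>
    set D : ℕ → ℤ := fun i => (2 * n).choose (n + i) with hD
    have hpascal (j : ℕ) : ((2 * (n + 1)).choose (n + 1 + (j + 1)) : ℤ) =
        D j + 2 * D (j + 1) + D (j + 2) := by
      rw [show 2 * (n + 1) = 2 * n + 1 + 1 by ring, show n + 1 + (j + 1) = n + j + 1 + 1 by ring,
        Nat.choose_succ_succ', Nat.choose_succ_succ', Nat.choose_succ_succ']
      simp only [hD]
      push_cast
      ring_nf
    have hD1 : D (n + 1) = 0 := by
      simp [hD, Nat.choose_eq_zero_of_lt (by omega : 2 * n < n + (n + 1))]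
    have hD2 : D (n + 2) = 0 := by
      simp [hD, Nat.choose_eq_zero_of_lt (by omega : 2 * n < n + (n + 2))]
    have hprev : upperWeightedSum n - (2 * n).choose n =
        ∑ j ∈ range (n + 1), weight (j + 1) * D (j + 1) := by
      rw [upperWeightedSum_sub_choose, sum_range_succ, hD1, mul_zero, add_zero]
    have hsplit : ∑ j ∈ range (n + 1), weight (j + 1) * (D j + 2 * D (j + 1) + D (j + 2)) =
        ∑ j ∈ range (n + 1), weight (j + 1) * D (j + 1) +
          ∑ j ∈ range (n + 1), weight (j + 1) * (D j + D (j + 1) + D (j + 2)) := by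
      rw [← sum_add_distrib]
      exact sum_congr rfl fun j _ => by ring
    rw [sum_range_succ, ih, hprev, upperWeightedSum_sub_choose, catalan_eq_choose_sub_choose]
    simp only [hpascal]
    rw [hsplit, sum_range_weight_mul_add_add, hD1, hD2]
    simp [hD]

section Prime

variable {p : ℕ}

lemma natCast_mul_eq_zero {x y : ℕ} (hx : p ∣ x) (hy : p ∣ y) :
    ((x * y : ℕ) : ZMod (p ^ 2)) = 0 := by
  rw [ZMod.natCast_eq_zero_iff, sq]
  exact Nat.mul_dvd_mul hx hy

variable [hp : Fact p.Prime]

lemma isUnit_natCast_iff {x : ℕ} : IsUnit (x : ZMod (p ^ 2)) ↔ ¬ p ∣ x := by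
  rw [ZMod.isUnit_iff_coprime, Nat.coprime_pow_right_iff two_pos, Nat.coprime_comm,
    hp.out.coprime_iff_not_dvd]

lemma isUnit_natCast_mul_add (f : ℕ) {b : ℕ} (hb0 : 0 < b) (hb : b < p) :
    IsUnit ((f * p + b : ℕ) : ZMod (p ^ 2)) := by
  rw [isUnit_natCast_iff, Nat.dvd_add_right (dvd_mul_left p f)]
  exact fun h => (Nat.le_of_dvd hb0 h).not_gt hb

lemma choose_mul_add_modEq {N f q c : ℕ} (hq : q < p) (hc : c < p) :
    (p * N + q).choose (p * f + c) ≡ q.choose c * N.choose f [MOD p] := by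
  have h := Choose.choose_modEq_choose_mod_mul_choose_div_nat
    (n := p * N + q) (k := p * f + c) (p := p)
  rwa [Nat.mul_add_mod, Nat.mul_add_mod, Nat.mul_add_div hp.out.pos, Nat.mul_add_div hp.out.pos,
    Nat.mod_eq_of_lt hq, Nat.mod_eq_of_lt hc, Nat.div_eq_of_lt hq, Nat.div_eq_of_lt hc,
    add_zero, add_zero] at h

lemma prime_dvd_choose {n k : ℕ} (hn : p ∣ n) (hk : ¬ p ∣ k) : p ∣ n.choose k := by
  have h := Choose.choose_modEq_choose_mod_mul_choose_div_nat (n := n) (k := k) (p := p)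
  rw [Nat.mod_eq_zero_of_dvd hn, Nat.choose_eq_zero_of_lt
    (Nat.pos_of_ne_zero fun h => hk (Nat.dvd_of_mod_eq_zero h)), zero_mul] at h
  exact Nat.modEq_zero_iff_dvd.1 h

/-- Vandermonde's identity for `(u + 1) p = u p + p`: modulo `p²` only the terms taking `0` or
`p` elements from the last `p` survive, so the coefficients obey Pascal's rule. -/
lemma choose_mul_prime (u v : ℕ) :
    ((u * p).choose (v * p) : ZMod (p ^ 2)) = u.choose v := by
  induction u generalizing v with
  | zero =>
    cases v with
    | zero => simp
    | succ v => simp [Nat.choose_eq_zero_of_lt (Nat.mul_pos v.succ_pos hp.out.pos)]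
  | succ u ih =>
    cases v with
    | zero => simp
    | succ v =>
      rw [add_one_mul, Nat.add_choose_eq, Nat.cast_sum,
        sum_eq_add ((v + 1) * p, 0) (v * p, p) (by simp [hp.out.ne_zero])]
      · simp [ih, Nat.choose_succ_succ', add_comm]
      · rintro ⟨i, j⟩ hij ⟨hi, hj⟩
        rw [HasAntidiagonal.mem_antidiagonal] at hij
        rcases lt_or_ge p j with hpj | hjp
        · simp [Nat.choose_eq_zero_of_lt hpj]
        have hj0 : j ≠ 0 := by
          rintro rfl
          simp_all
        have hjp' : j < p := by
          refine lt_of_le_of_ne hjp fun h => hj (Prod.ext ?_ h)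
          have := add_one_mul v p
          simp only
          omega
        have hpj : ¬ p ∣ j := fun h => hj0 (Nat.eq_zero_of_dvd_of_lt h hjp')
        refine natCast_mul_eq_zero (prime_dvd_choose (dvd_mul_left p u) fun hi => hpj ?_)
          (hp.out.dvd_choose_self hj0 hjp')
        exact (Nat.dvd_add_right hi).1 (hij ▸ dvd_mul_left p (v + 1))
      · simp
      · simp [add_one_mul]

/-- With `n = (e + f) p - 1` and `k = f p + b - 1`, multiplying by the unit `k + 1` turns both
sides, modulo `p²`, into `p` times quantities that agree modulo `p` by Lucas' theorem. -/
lemma choose_mul_prime_add (e f : ℕ) {b : ℕ} (hb0 : 0 < b) (hb : b < p) :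
    (((e + f) * p).choose (f * p + b) : ZMod (p ^ 2)) = e * (e + f).choose f * p.choose b := by
  rcases e with _ | e
  · simp [Nat.choose_eq_zero_of_lt (by omega : f * p < f * p + b)]
  set N := e + f
  set n := p * N + (p - 1)
  set k := p * f + (b - 1)
  have hp0 := hp.out.pos
  have hn : (N + 1) * p = n + 1 := by
    simp only [n]
    rw [add_one_mul, mul_comm]
    omega
  have hk : f * p + b = k + 1 := by
    simp only [k]
    rw [mul_comm]
    omega
  have hlift : ((p * n.choose k : ℕ) : ZMod (p ^ 2)) =
      (p * ((p - 1).choose (b - 1) * N.choose f) : ℕ) :=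
    (ZMod.natCast_eq_natCast_iff _ _ _).2
      (sq p ▸ (choose_mul_add_modEq (by omega) (by omega)).mul_left' p)
  have h1 := Nat.add_one_mul_choose_eq n k
  have h2 := Nat.add_one_mul_choose_eq (p - 1) (b - 1)
  rw [Nat.sub_add_cancel hp0, Nat.sub_add_cancel hb0] at h2
  have h3 := Nat.choose_mul_succ_eq N f
  rw [show N + 1 - f = e + 1 by omega] at h3
  have hpb : ((p.choose b * p : ℕ) : ZMod (p ^ 2)) = 0 :=
    natCast_mul_eq_zero (hp.out.dvd_choose_self hb0.ne' hb) dvd_rfl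
  have hn' := congrArg (Nat.cast (R := ZMod (p ^ 2))) hn.symm
  have hk' := congrArg (Nat.cast (R := ZMod (p ^ 2))) hk.symm
  replace h2 := congrArg (Nat.cast (R := ZMod (p ^ 2))) h2
  replace h3 := congrArg (Nat.cast (R := ZMod (p ^ 2))) h3
  rw [show e + 1 + f = N + 1 by omega, hn, hk]
  refine (hk ▸ isUnit_natCast_mul_add f hb0 hb).mul_left_injective ?_
  simp only
  rw [← Nat.cast_mul, ← h1]
  push_cast at hlift hn' hk' h2 h3 hpb ⊢
  linear_combination (n.choose k : ZMod (p ^ 2)) * hn' + (N + 1 : ZMod (p ^ 2)) * hlift +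
    (N + 1 : ZMod (p ^ 2)) * N.choose f * h2 + (p.choose b * b : ZMod (p ^ 2)) * h3 -
    ((e + 1) * (N + 1).choose f * p.choose b : ZMod (p ^ 2)) * hk' -
    ((e + 1) * (N + 1).choose f * f : ZMod (p ^ 2)) * hpb

lemma upperWeightedSum_mul_prime (hp3 : p % 3 = 1) (m : ℕ) :
    (upperWeightedSum (m * p) : ZMod (p ^ 2)) = upperWeightedSum m := by
  have hp6 : p % 6 = 1 := by rcases hp.out.eq_two_or_odd with h | h <;> omega
  have hblock (a : ℕ) (ha : a < m) :
      ∑ b ∈ range p, (weight (a * p + b) : ZMod (p ^ 2)) *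
          (2 * (m * p)).choose (m * p + (a * p + b)) =
        weight a * (2 * m).choose (m + a) := by
    have hrow : 2 * (m * p) = (m - a + (m + a)) * p := by
      rw [show m - a + (m + a) = 2 * m by omega, mul_assoc]
    have hcol (b : ℕ) : m * p + (a * p + b) = (m + a) * p + b := by ring
    have hlow : (weight (a * p + 0) : ZMod (p ^ 2)) *
        (2 * (m * p)).choose (m * p + (a * p + 0)) = weight a * (2 * m).choose (m + a) := by
      rw [weight_mul_add hp3, hcol, add_zero, add_zero, ← mul_assoc, choose_mul_prime]
    have hdigit (b : ℕ) (hb : b ∈ Ico 1 p) :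
        (weight (a * p + b) : ZMod (p ^ 2)) * (2 * (m * p)).choose (m * p + (a * p + b)) =
          ((m - a : ℕ) * (2 * m).choose (m + a) : ZMod (p ^ 2)) *
            (weight (a + b) * p.choose b) := by
      rw [mem_Ico] at hb
      rw [weight_mul_add hp3, hrow, hcol, choose_mul_prime_add _ _ hb.1 hb.2,
        show m - a + (m + a) = 2 * m by omega]
      ring
    have hvanish := congrArg (Int.cast (R := ZMod (p ^ 2))) (sum_Ico_weight_mul_choose hp6 a)
    push_cast at hvanish
    rw [range_eq_Ico, sum_eq_sum_Ico_succ_bot hp.out.pos, sum_congr rfl hdigit, ← mul_sum,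
      hvanish, mul_zero, add_zero, hlow]
  simp only [upperWeightedSum, Int.cast_sum, Int.cast_mul, Int.cast_natCast]
  rw [sum_range_succ, sum_range_mul, sum_congr rfl fun a ha => hblock a (mem_range.1 ha),
    sum_range_succ, two_mul, two_mul, Nat.choose_self, Nat.choose_self]
  simpa using congrArg Int.cast (weight_mul_add hp3 m 0)

theorem sum_range_catalan_mul_prime (hp3 : p % 3 = 1) (m : ℕ) :
    ∑ k ∈ range (m * p), (catalan k : ZMod (p ^ 2)) =
      ∑ k ∈ range m, (catalan k : ZMod (p ^ 2)) := by
  have h (n : ℕ) := congrArg (Int.cast (R := ZMod (p ^ 2))) (sum_range_catalan n)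
  push_cast at h
  rw [h, h, upperWeightedSum_mul_prime hp3, ← mul_assoc, choose_mul_prime]

theorem sum_Ico_catalan_mul_prime (hp3 : p % 3 = 1) (r : ℕ) :
    ∑ k ∈ Ico (r * p) ((r + 1) * p), (catalan k : ZMod (p ^ 2)) = catalan r := by
  rw [sum_Ico_eq_sub _ (Nat.mul_le_mul_right p r.le_succ), sum_range_catalan_mul_prime hp3,
    sum_range_catalan_mul_prime hp3, sum_range_succ, add_sub_cancel_left]

end Prime

lemma ratCongr_of_intCast_eq {p m : ℕ} (hp : p ≠ 1) {a b : ℤ}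
    (h : (a : ZMod (p ^ m)) = b) : ratCongr p m a b := by
  obtain ⟨s, hs⟩ := (ZMod.intCast_eq_intCast_iff_dvd_sub b a _).1 h.symm
  refine ⟨s, 1, ?_, ?_⟩
  · rwa [Int.natCast_dvd_ofNat, Nat.dvd_one]
  · push_cast at hs
    rw [Int.cast_one, mul_one, ← Int.cast_sub, hs]
    push_cast
    ring

end BlockSumCatalan

theorem block_sum_catalan_one_mod_three_general (p r : ℕ) (hp : p.Prime)
    (hp3 : p % 3 = 1) :
    ratCongr p 2
      (∑ k ∈ Finset.Ico (r * p) ((r + 1) * p), ((2 * k).choose k : ℚ) / (k + 1))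
      (((2 * r).choose r : ℚ) / (r + 1)) := by
  have := Fact.mk hp
  have h := BlockSumCatalan.ratCongr_of_intCast_eq hp.ne_one (m := 2)
    (a := ∑ k ∈ Ico (r * p) ((r + 1) * p), (catalan k : ℤ)) (b := catalan r)
    (by exact_mod_cast BlockSumCatalan.sum_Ico_catalan_mul_prime hp3 r)
  push_cast at h
  simpa only [BlockSumCatalan.catalan_eq_choose_div] using h

theorem block_sum_catalan_one_mod_three (p r : ℕ) (hp : p.Prime) (hp5 : 5 ≤ p)
    (hp3 : p % 3 = 1) :
    ratCongr p 2
      (∑ k ∈ Finset.Ico (r * p) ((r + 1) * p), ((2 * k).choose k : ℚ) / (k + 1))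
      (((2 * r).choose r : ℚ) / (r + 1)) :=
  block_sum_catalan_one_mod_three_general p r hp hp3
end

section
/- Let p ≥ 5 be a prime. Then C(2p-2,p-1) ≡ -p - 2p² (mod p³); equivalently, the Catalan number C(2p-2,p-1)/p satisfies C(2p-2,p-1)/p ≡ -1 - 2p (mod p²). -/
/-!
By Vandermonde, `C(2p, p) = ∑ₖ C(p, k)²`, and every term with `0 < k < p` is divisible by `p²`,
so `C(2p, p) ≡ 2 (mod p²)`. On the other hand `C(2p, p) = 2 (2p - 1) Cat(p - 1)`, and since
`(2p - 1)(-1 - 2p) = 1 - 4p²`, the odd number `2p - 1` is inverted modulo `p²` by `-1 - 2p`.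
This gives the Catalan congruence; multiplying it by `p` gives the one for `C(2p - 2, p - 1)`.
-/

open Finset

theorem Nat.Prime.centralBinom_modEq_two {p : ℕ} (hp : p.Prime) :
    p.centralBinom ≡ 2 [MOD p ^ 2] := by
  obtain ⟨n, rfl⟩ : ∃ n, p = n + 1 := ⟨p - 1, by have := hp.one_lt; omega⟩
  have hmiddle : (n + 1) ^ 2 ∣ ∑ k ∈ range n, (n + 1).choose (k + 1) ^ 2 :=
    dvd_sum fun k hk => pow_dvd_pow_of_dvd
      (hp.dvd_choose_self k.succ_ne_zero (by simpa using mem_range.mp hk)) 2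
  rw [Nat.centralBinom_eq_two_mul_choose, ← Nat.sum_range_choose_sq, sum_range_succ,
    sum_range_succ', Nat.choose_self, Nat.choose_zero_right]
  convert (Nat.modEq_zero_iff_dvd.mpr hmiddle).add_right 2 using 1
  ring

theorem Nat.centralBinom_succ_eq_mul_catalan (n : ℕ) :
    (n + 1).centralBinom = 2 * (2 * n + 1) * catalan n := by
  refine Nat.eq_of_mul_eq_mul_left n.succ_pos ?_
  rw [Nat.succ_mul_centralBinom_succ, ← succ_mul_catalan_eq_centralBinom, Nat.succ_eq_add_one]
  ring

theorem catalan_pred_modEq {p : ℕ} (hp : p.Prime) (hp2 : p ≠ 2) :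
    (catalan (p - 1) : ℤ) ≡ -1 - 2 * (p : ℤ) [ZMOD (p : ℤ) ^ 2] := by
  have hcentral : ((p.centralBinom : ℕ) : ℤ) ≡ 2 [ZMOD (p : ℤ) ^ 2] := by
    exact_mod_cast (Int.natCast_modEq_iff.mpr hp.centralBinom_modEq_two)
  obtain ⟨n, rfl⟩ : ∃ n, p = n + 1 := ⟨p - 1, by have := hp.one_lt; omega⟩
  rw [Nat.centralBinom_succ_eq_mul_catalan] at hcentral
  push_cast at hcentral ⊢
  have hcoprime : IsCoprime ((n : ℤ) + 1) (2 * (2 * n + 1)) := by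
    rw [Prime.coprime_iff_not_dvd (by exact_mod_cast Nat.prime_iff_prime_int.mp hp)]
    intro hdvd
    have htwo : ((n : ℤ) + 1) ∣ 2 := by
      have := dvd_sub hdvd (dvd_mul_left ((n : ℤ) + 1) 4)
      rw [show 2 * (2 * (n : ℤ) + 1) - 4 * (n + 1) = -2 by ring, dvd_neg] at this
      exact this
    exact hp2 ((Nat.prime_dvd_prime_iff_eq hp Nat.prime_two).mp (by exact_mod_cast htwo))
  have hdvd : ((n : ℤ) + 1) ^ 2 ∣ 2 * (2 * n + 1) * ((catalan n : ℤ) + 1 + 2 * (n + 1)) := by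
    rw [show 2 * (2 * (n : ℤ) + 1) * (catalan n + 1 + 2 * (n + 1))
      = 2 * (2 * n + 1) * catalan n - 2 + 8 * (n + 1) ^ 2 by ring]
    exact dvd_add hcentral.symm.dvd (dvd_mul_left _ 8)
  rw [Int.modEq_comm, Int.modEq_iff_dvd,
    show (catalan n : ℤ) - (-1 - 2 * (n + 1)) = catalan n + 1 + 2 * (n + 1) by ring]
  exact hcoprime.pow_left.dvd_of_dvd_mul_left hdvd

theorem central_binom_pred_congruence (p : ℕ) (hp : p.Prime) (hp5 : 5 ≤ p) :
    (((2 * p - 2).choose (p - 1) : ℤ) ≡ -(p : ℤ) - 2 * (p : ℤ) ^ 2 [ZMOD (p : ℤ) ^ 3]) ∧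
      ((catalan (p - 1) : ℤ) ≡ -1 - 2 * (p : ℤ) [ZMOD (p : ℤ) ^ 2]) := by
  have hcatalan := catalan_pred_modEq hp (by omega)
  have hchoose : (2 * p - 2).choose (p - 1) = p * catalan (p - 1) := by
    rw [← Nat.mul_sub_one, ← Nat.centralBinom_eq_two_mul_choose,
      ← succ_mul_catalan_eq_centralBinom, Nat.sub_add_cancel hp.one_le]
  refine ⟨?_, hcatalan⟩
  have := hcatalan.mul_left' (c := (p : ℤ))
  rw [hchoose]
  push_cast
  convert this using 2 <;> ring
end

section
/- Let p ≥ 5 be a prime. Then ∑_{k=0}^{p-2} C(2k,k)/(k+1)² ≡ 1 + 3·(p/3) (mod p), as a congruence of rational numbers, where (p/3) denotes the Legendre symbol of p modulo 3. -/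
/-!
Write `p = 2m + 1`. Modulo `p`, `C(2k, k) ≡ (-4)^k C(m, k)`, which vanishes for `m < k < p`, so
the sum is `S = ∑_{k ≤ m} C(m, k) (-4)^k / (k + 1)^2`. The identity
`(n + 1) ∑_k C(n, k) y^(k+1) / (k+1)^2 = ∑_{i=1}^{n+1} ((1 + y)^i - 1) / i`
at `y = -4`, `n = m`, together with `m + 1 ≡ 1/2`, gives `-2 S ≡ ∑_{i=1}^{m+1} ((-3)^i - 1) / i`.
For `1 ≤ i ≤ m`, `1/i ≡ -2 C(p, 2i)/p`, so the terms up to `m` add up to `-2/p` times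
`E(-3) - E(1)`, where `E(y) = ∑_i C(p, 2i) y^i` is the even part of `(1 + √y)^p`; both equal
`2^(p-1)` because `(1 + √-3)^3 = -8` and `p ≡ ±1 (mod 6)`. The last term leaves
`S ≡ 1 - (-3)^(m+1) = 1 + 3 (-3)^m`, and `(-3)^m ≡ (-3/p) = (p/3)` by Euler's criterion.
The rational congruence follows because the denominators `(k + 1)^2` are prime to `p`.
-/

open Finset

theorem Finset.prod_mul_sum_div {ι K : Type*} [Field K] [DecidableEq ι] (s : Finset ι)
    (f g : ι → K) (hg : ∀ i ∈ s, g i ≠ 0) :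
    (∏ i ∈ s, g i) * ∑ i ∈ s, f i / g i = ∑ i ∈ s, f i * ∏ j ∈ s.erase i, g j := by
  rw [mul_sum]
  refine sum_congr rfl fun i hi => ?_
  rw [← mul_prod_erase s g hi]
  field_simp [hg i hi]

theorem ratCongr_sum_div {ι : Type*} (p : ℕ) [Fact p.Prime] (s : Finset ι) (f g : ι → ℤ)
    (c : ℤ) (hg : ∀ i ∈ s, (g i : ZMod p) ≠ 0) (h : ∑ i ∈ s, (f i : ZMod p) / g i = c) :
    ratCongr p 1 (∑ i ∈ s, (f i : ℚ) / g i) c := by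
  classical
  set D := ∏ i ∈ s, g i
  set N := ∑ i ∈ s, f i * ∏ j ∈ s.erase i, g j - D * c
  have cast_N : ∀ (K : Type) [Field K], (∀ i ∈ s, (g i : K) ≠ 0) →
      (N : K) = D * (∑ i ∈ s, (f i : K) / g i - c) := by
    intro K _ hgK
    push_cast [N, D]
    rw [mul_sub, prod_mul_sum_div s _ _ hgK]
  have hgQ : ∀ i ∈ s, (g i : ℚ) ≠ 0 := fun i hi =>
    Int.cast_ne_zero.mpr fun h0 => hg i hi (by rw [h0, Int.cast_zero])
  obtain ⟨k, hk⟩ : (p : ℤ) ∣ N := by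
    rw [← ZMod.intCast_zmod_eq_zero_iff_dvd, cast_N _ hg, h, sub_self, mul_zero]
  refine ⟨k, D, ?_, ?_⟩
  · rw [← ZMod.intCast_zmod_eq_zero_iff_dvd]
    push_cast [D]
    exact prod_ne_zero_iff.mpr hg
  · rw [pow_one, mul_comm, ← Int.cast_natCast, ← Int.cast_mul, ← hk, cast_N _ hgQ]

section BinomialBisection

variable {R : Type*} [CommRing R]

/-- With `s ^ 2 = y`, `(1 + s) ^ n = evenChooseSum y n + oddChooseSum y n * s`. -/
def evenChooseSum (y : R) (n : ℕ) : R := ∑ i ∈ range (n + 1), (n.choose (2 * i) : R) * y ^ i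

def oddChooseSum (y : R) (n : ℕ) : R :=
  ∑ i ∈ range (n + 1), (n.choose (2 * i + 1) : R) * y ^ i

theorem oddChooseSum_succ (y : R) (n : ℕ) :
    oddChooseSum y (n + 1) = evenChooseSum y n + oddChooseSum y n := by
  rw [oddChooseSum, sum_range_succ, Nat.choose_eq_zero_of_lt (by omega), Nat.cast_zero, zero_mul,
    add_zero, evenChooseSum, oddChooseSum, ← sum_add_distrib]
  refine sum_congr rfl fun i _ => ?_
  rw [Nat.choose_succ_succ', Nat.cast_add, add_mul]

theorem evenChooseSum_succ (y : R) (n : ℕ) :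
    evenChooseSum y (n + 1) = evenChooseSum y n + y * oddChooseSum y n := by
  have pascal : ∀ i, ((n + 1).choose (2 * (i + 1)) : R) * y ^ (i + 1)
      = y * (n.choose (2 * i + 1) * y ^ i) + n.choose (2 * (i + 1)) * y ^ (i + 1) := by
    intro i
    rw [show 2 * (i + 1) = 2 * i + 1 + 1 by ring, Nat.choose_succ_succ']
    push_cast
    ring
  have shift : evenChooseSum y n
      = ∑ i ∈ range (n + 1), (n.choose (2 * (i + 1)) : R) * y ^ (i + 1) + 1 := by
    rw [evenChooseSum, sum_range_succ', sum_range_succ _ n,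
      Nat.choose_eq_zero_of_lt (show n < 2 * (n + 1) by omega)]
    simp
  rw [evenChooseSum, sum_range_succ', sum_congr rfl fun i _ => pascal i, sum_add_distrib, shift,
    oddChooseSum, mul_sum]
  simp only [mul_zero, Nat.choose_zero_right, Nat.cast_one, pow_zero, mul_one]
  ring

theorem evenChooseSum_add_oddChooseSum_one (n : ℕ) :
    evenChooseSum (1 : R) n + oddChooseSum 1 n = 2 ^ n := by
  induction n with
  | zero => simp [evenChooseSum, oddChooseSum]
  | succ n ih =>
    rw [evenChooseSum_succ, oddChooseSum_succ, one_mul, pow_succ, ← ih]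
    ring

theorem evenChooseSum_one_succ (n : ℕ) : evenChooseSum (1 : R) (n + 1) = 2 ^ n := by
  rw [evenChooseSum_succ, one_mul, evenChooseSum_add_oddChooseSum_one]

/-- `(1 + √-3) ^ 3 = -8`. -/
theorem chooseSums_neg_three_add_three (n : ℕ) :
    evenChooseSum (-3 : R) (n + 3) = -8 * evenChooseSum (-3) n ∧
      oddChooseSum (-3 : R) (n + 3) = -8 * oddChooseSum (-3) n := by
  simp only [evenChooseSum_succ, oddChooseSum_succ]
  constructor <;> ring

theorem evenChooseSum_neg_three_add_six (n : ℕ) :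
    evenChooseSum (-3 : R) (n + 6) = 64 * evenChooseSum (-3) n := by
  rw [(chooseSums_neg_three_add_three (n + 3)).1, (chooseSums_neg_three_add_three n).1]
  ring

theorem evenChooseSum_neg_three {n : ℕ} (hn : n % 6 = 1 ∨ n % 6 = 5) :
    evenChooseSum (-3 : R) n = 2 ^ (n - 1) := by
  induction n using Nat.strong_induction_on with
  | _ n ih =>
    obtain hn6 | hn6 := lt_or_ge n 6
    · interval_cases n <;> first | omega | norm_num [evenChooseSum, sum_range_succ, Nat.choose]
    · obtain ⟨k, rfl⟩ : ∃ k, n = k + 6 := ⟨n - 6, by omega⟩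
      rw [evenChooseSum_neg_three_add_six, ih k (by omega) (by omega),
        show k + 6 - 1 = k - 1 + 6 by omega, pow_add]
      norm_num
      ring

end BinomialBisection

section HarmonicBinomial

variable {K : Type*} [Field K]

theorem sum_range_choose_succ_mul_pow (n : ℕ) (y : K) :
    ∑ t ∈ range n, (n.choose (t + 1) : K) * y ^ (t + 1) = (1 + y) ^ n - 1 := by
  rw [add_comm, add_pow, sum_range_succ']
  simp [mul_comm]

theorem sum_range_choose_succ_mul_pow_div (n : ℕ) (y : K) (hn : ∀ i < n, (i + 1 : K) ≠ 0) :
    ∑ t ∈ range n, (n.choose (t + 1) : K) * y ^ (t + 1) / (t + 1)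
      = ∑ i ∈ range n, ((1 + y) ^ (i + 1) - 1) / (i + 1) := by
  induction n with
  | zero => simp
  | succ n ih =>
    have hn1 : (n + 1 : K) ≠ 0 := hn n n.lt_succ_self
    have absorb : ∀ t ∈ range (n + 1), (n.choose t : K) * y ^ (t + 1) / (t + 1)
        = ((n + 1).choose (t + 1) : K) * y ^ (t + 1) / (n + 1) := by
      intro t ht
      have ht1 : (t + 1 : K) ≠ 0 := hn t (by simpa using ht)
      have h : ((n : K) + 1) * n.choose t = (n + 1).choose (t + 1) * (t + 1) := by
        exact_mod_cast congrArg (Nat.cast (R := K)) (Nat.add_one_mul_choose_eq n t)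
      field_simp
      linear_combination y ^ (t + 1) * h
    simp only [Nat.choose_succ_succ', Nat.cast_add, add_mul, add_div, sum_add_distrib]
    rw [sum_congr rfl absorb, ← sum_div, sum_range_choose_succ_mul_pow, sum_range_succ _ n,
      Nat.choose_succ_self, Nat.cast_zero, zero_mul, zero_div, add_zero,
      ih fun i hi => hn i (by omega), sum_range_succ _ n]
    ring

theorem mul_sum_range_choose_mul_pow_div_sq (n : ℕ) (y : K)
    (hn : ∀ i < n + 1, (i + 1 : K) ≠ 0) :
    (n + 1) * ∑ k ∈ range (n + 1), (n.choose k : K) * y ^ (k + 1) / (k + 1) ^ 2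
      = ∑ i ∈ range (n + 1), ((1 + y) ^ (i + 1) - 1) / (i + 1) := by
  rw [← sum_range_choose_succ_mul_pow_div _ _ hn, mul_sum]
  refine sum_congr rfl fun k hk => ?_
  have hk1 : (k + 1 : K) ≠ 0 := hn k (by simpa using hk)
  have h : ((n : K) + 1) * n.choose k = (n + 1).choose (k + 1) * (k + 1) := by
    exact_mod_cast congrArg (Nat.cast (R := K)) (Nat.add_one_mul_choose_eq n k)
  field_simp
  linear_combination y ^ (k + 1) * h

end HarmonicBinomial

theorem Nat.cast_choose_succ_mul {R : Type*} [CommRing R] (m k : ℕ) :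
    (m.choose (k + 1) : R) * (k + 1) = m.choose k * (m - k) := by
  rcases le_or_gt k m with hkm | hkm
  · have := congrArg (Nat.cast (R := R)) (Nat.choose_succ_right_eq m k)
    push_cast [Nat.cast_sub hkm] at this
    exact this
  · simp [Nat.choose_eq_zero_of_lt hkm, Nat.choose_eq_zero_of_lt (hkm.trans k.lt_succ_self)]

theorem Nat.Prime.mod_six_eq_one_or_five {p : ℕ} (hp : p.Prime) (hp3 : 3 < p) :
    p % 6 = 1 ∨ p % 6 = 5 := by
  have h2 : p % 2 = 1 := Nat.odd_iff.mp (hp.odd_of_ne_two (by omega))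
  have h3 : p % 3 ≠ 0 := fun h => by
    have := (Nat.prime_dvd_prime_iff_eq Nat.prime_three hp).mp (Nat.dvd_of_mod_eq_zero h)
    omega
  omega

theorem ZMod.natCast_ne_zero_of_lt {n k : ℕ} (hk0 : k ≠ 0) (hk : k < n) : (k : ZMod n) ≠ 0 :=
  fun h => hk0 (Nat.eq_zero_of_dvd_of_lt ((ZMod.natCast_eq_zero_iff _ _).mp h) hk)

section ZModPrime

variable {p : ℕ} [hp : Fact p.Prime]

theorem ZMod.natCast_sub_one_choose {k : ℕ} (hk : k < p) :
    ((p - 1).choose k : ZMod p) = (-1) ^ k := by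
  induction k with
  | zero => simp
  | succ k ih =>
    have pascal : (p - 1).choose k + (p - 1).choose (k + 1) = p.choose (k + 1) := by
      rw [← Nat.choose_succ_succ', Nat.sub_add_cancel hp.out.one_le]
    have hdvd : (p.choose (k + 1) : ZMod p) = 0 :=
      (ZMod.natCast_eq_zero_iff _ _).mpr (hp.out.dvd_choose_self k.succ_ne_zero hk)
    rw [← pascal, Nat.cast_add, ih (by omega)] at hdvd
    linear_combination hdvd

theorem ZMod.natCast_choose_div_mul {j : ℕ} (hj0 : 0 < j) (hj : j < p) :
    ((p.choose j / p : ℕ) : ZMod p) * j = (-1) ^ (j - 1) := by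
  have hq : p.choose j / p * j = (p - 1).choose (j - 1) := by
    apply Nat.eq_of_mul_eq_mul_left hp.out.pos
    have := Nat.add_one_mul_choose_eq (p - 1) (j - 1)
    rw [Nat.sub_add_cancel hp.out.one_le, Nat.sub_add_cancel hj0] at this
    rw [this, ← mul_assoc, Nat.mul_div_cancel' (hp.out.dvd_choose_self hj0.ne' hj)]
  rw [← ZMod.natCast_sub_one_choose (by omega), ← hq, Nat.cast_mul]

theorem ZMod.natCast_two_mul_choose_self {m k : ℕ} (hm : 2 * m + 1 = p) (hk : k < p) :
    ((2 * k).choose k : ZMod p) = (-4) ^ k * m.choose k := by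
  induction k with
  | zero => simp
  | succ k ih =>
    have hk1 : (k + 1 : ZMod p) ≠ 0 := by
      exact_mod_cast ZMod.natCast_ne_zero_of_lt k.succ_ne_zero hk
    have hrec : (k + 1 : ZMod p) * (2 * (k + 1)).choose (k + 1)
        = 2 * (2 * k + 1) * (2 * k).choose k := by
      exact_mod_cast congrArg (Nat.cast (R := ZMod p)) (Nat.succ_mul_centralBinom_succ k)
    have hp0 : ((2 * m + 1 : ℕ) : ZMod p) = 0 := by rw [hm, ZMod.natCast_self]
    push_cast at hp0
    apply mul_left_cancel₀ hk1
    rw [hrec, ih (by omega)]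
    linear_combination (-(-4 : ZMod p) ^ (k + 1)) * Nat.cast_choose_succ_mul (R := ZMod p) m k
      + 2 * (-4 : ZMod p) ^ k * m.choose k * hp0

theorem legendreSym_neg_three (hp3 : 3 < p) : legendreSym p (-3) = leg3 p := by
  have h6 := hp.out.mod_six_eq_one_or_five hp3
  rw [jacobiSym.legendreSym.to_jacobiSym,
    jacobiSym.mod_right _ (hp.out.odd_of_ne_two (by omega))]
  have : p % 12 = 1 ∨ p % 12 = 5 ∨ p % 12 = 7 ∨ p % 12 = 11 := by omega
  rcases this with h | h | h | h <;> simp [h, leg3, show p % 3 = p % 12 % 3 by omega] <;> norm_num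

theorem ZMod.neg_three_pow_div_two (hp3 : 3 < p) : (-3 : ZMod p) ^ (p / 2) = leg3 p := by
  have := legendreSym.eq_pow p (-3)
  rw [legendreSym_neg_three hp3] at this
  exact_mod_cast this.symm

theorem ZMod.sum_range_pow_succ_div_succ {m : ℕ} (hm : 2 * m + 1 = p) (y : ℤ) :
    ∑ i ∈ range m, (y : ZMod p) ^ (i + 1) / (i + 1)
      = -2 * (((evenChooseSum y p - 1) / p : ℤ) : ZMod p) := by
  set q : ℕ → ℕ := fun i => p.choose (2 * (i + 1)) / p
  have hq : ∀ i ∈ range m, p * q i = p.choose (2 * (i + 1)) := fun i hi =>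
    Nat.mul_div_cancel' (hp.out.dvd_choose_self (by omega) (by simp at hi; omega))
  have hE : evenChooseSum y p - 1 = p * ∑ i ∈ range m, (q i : ℤ) * y ^ (i + 1) := by
    rw [evenChooseSum, eventually_constant_sum (N := m + 1) ?_ (by omega), sum_range_succ',
      mul_sum]
    · simp only [mul_zero, Nat.choose_zero_right, Nat.cast_one, pow_zero, mul_one,
        add_sub_cancel_right]
      refine sum_congr rfl fun i hi => ?_
      rw [← hq i hi]
      push_cast
      ring
    · intro i hi
      rw [Nat.choose_eq_zero_of_lt (by omega), Nat.cast_zero, zero_mul]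
  rw [hE, Int.mul_ediv_cancel_left _ (by exact_mod_cast hp.out.ne_zero)]
  push_cast
  rw [mul_sum]
  refine sum_congr rfl fun i hi => ?_
  have hinv : ((i : ZMod p) + 1)⁻¹ = -2 * q i := by
    apply inv_eq_of_mul_eq_one_left
    have := ZMod.natCast_choose_div_mul (p := p) (j := 2 * (i + 1)) (by omega)
      (by simp at hi; omega)
    rw [Odd.neg_one_pow ⟨i, by omega⟩] at this
    push_cast at this
    linear_combination -this
  rw [div_eq_mul_inv, hinv]
  ring

theorem ZMod.sum_range_neg_three_pow_succ_sub_one_div {m : ℕ} (hm : 2 * m + 1 = p)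
    (hp3 : 3 < p) : ∑ i ∈ range m, ((-3 : ZMod p) ^ (i + 1) - 1) / (i + 1) = 0 := by
  have h1 := ZMod.sum_range_pow_succ_div_succ hm (-3)
  have h2 := ZMod.sum_range_pow_succ_div_succ hm 1
  have hEv : evenChooseSum (-3 : ℤ) p = evenChooseSum 1 p := by
    rw [evenChooseSum_neg_three (hp.out.mod_six_eq_one_or_five hp3), ← evenChooseSum_one_succ,
      Nat.sub_add_cancel hp.out.one_le]
  push_cast at h1 h2
  simp only [one_pow] at h2
  simp only [sub_div, sum_sub_distrib, h1, h2, hEv, sub_self]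

theorem ZMod.sum_range_two_mul_choose_self_div_sq_eq {m : ℕ} (hm : 2 * m + 1 = p) :
    ∑ k ∈ range (p - 1), ((2 * k).choose k : ZMod p) / (k + 1) ^ 2
      = ∑ k ∈ range (m + 1), (m.choose k : ZMod p) * (-4) ^ k / (k + 1) ^ 2 := by
  have := hp.out.two_le
  rw [sum_congr rfl fun k hk => by
      rw [ZMod.natCast_two_mul_choose_self hm (by simp at hk; omega), mul_comm],
    eventually_constant_sum (N := m + 1) (fun k hk => ?_) (by omega)]
  rw [Nat.choose_eq_zero_of_lt (by omega)]
  simp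

theorem ZMod.sum_range_two_mul_choose_self_div_sq (hp5 : 5 ≤ p) :
    ∑ k ∈ range (p - 1), ((2 * k).choose k : ZMod p) / (k + 1) ^ 2
      = 1 + 3 * (leg3 p : ZMod p) := by
  obtain ⟨m, hm⟩ : ∃ m, 2 * m + 1 = p := ⟨p / 2, by have := hp.out.eq_two_or_odd; omega⟩
  rw [ZMod.sum_range_two_mul_choose_self_div_sq_eq hm]
  set S := ∑ k ∈ range (m + 1), (m.choose k : ZMod p) * (-4) ^ k / (k + 1) ^ 2
  have identity := mul_sum_range_choose_mul_pow_div_sq m (-4 : ZMod p) fun i hi => by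
    exact_mod_cast ZMod.natCast_ne_zero_of_lt i.succ_ne_zero (show i + 1 < p by omega)
  have factor : ∑ k ∈ range (m + 1), (m.choose k : ZMod p) * (-4) ^ (k + 1) / (k + 1) ^ 2
      = -4 * S := by
    rw [mul_sum]
    exact sum_congr rfl fun k _ => by ring
  have hL : (-3 : ZMod p) ^ m = leg3 p := by
    rw [show m = p / 2 by omega]
    exact ZMod.neg_three_pow_div_two (by omega)
  have half : ((m : ZMod p) + 1) * 2 = 1 := by
    have hp0 : ((2 * m + 1 : ℕ) : ZMod p) = 0 := by rw [hm, ZMod.natCast_self]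
    push_cast at hp0
    linear_combination hp0
  rw [factor, show (1 + -4 : ZMod p) = -3 by norm_num,
    sum_range_succ (fun i => ((-3 : ZMod p) ^ (i + 1) - 1) / (i + 1)),
    ZMod.sum_range_neg_three_pow_succ_sub_one_div hm (by omega), zero_add, pow_succ, hL,
    div_eq_mul_inv, inv_eq_of_mul_eq_one_right half] at identity
  linear_combination (-((m : ZMod p) + 1)) * identity
    + (1 + 3 * (leg3 p : ZMod p) - (1 + 2 * ((m : ZMod p) + 1)) * S) * half

end ZModPrime

theorem sum_central_binom_div_sq (p : ℕ) (hp : p.Prime) (hp5 : 5 ≤ p) :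
    ratCongr p 1
      (∑ k ∈ Finset.range (p - 1), ((2 * k).choose k : ℚ) / (k + 1) ^ 2)
      (1 + 3 * (leg3 p : ℚ)) := by
  have := Fact.mk hp
  have key := ratCongr_sum_div p (range (p - 1)) (fun k => ((2 * k).choose k : ℤ))
    (fun k => ((k : ℤ) + 1) ^ 2) (1 + 3 * leg3 p) (fun k hk => ?_) ?_
  · push_cast at key
    exact key
  · have hk1 : ((k + 1 : ℕ) : ZMod p) ≠ 0 :=
      ZMod.natCast_ne_zero_of_lt k.succ_ne_zero (by simp at hk; omega)
    push_cast at hk1 ⊢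
    exact pow_ne_zero 2 hk1
  · push_cast
    exact ZMod.sum_range_two_mul_choose_self_div_sq hp5
end

section
/- Let p ≥ 5 be a prime and let k be an integer with 0 ≤ k ≤ p-1. Then (-1)^k·C(2k,k)·C(p-1,k) ≡ C(2k,k)·(1 - p·H_k) (mod p²), as a congruence of rational numbers. -/
open Finset Nat

theorem Finset.sq_dvd_prod_add_sub {ι R : Type*} [CommRing R] [DecidableEq ι]
    (s : Finset ι) (f : ι → R) (x : R) :
    x ^ 2 ∣ ∏ i ∈ s, (f i + x) - (∏ i ∈ s, f i + x * ∑ i ∈ s, ∏ j ∈ s.erase i, f j) := by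
  induction s using Finset.induction_on with
  | empty => simp
  | insert a s ha ih =>
    obtain ⟨d, hd⟩ := ih
    have hsum : ∑ i ∈ s, ∏ j ∈ (insert a s).erase i, f j =
        f a * ∑ i ∈ s, ∏ j ∈ s.erase i, f j := by
      rw [mul_sum]
      refine sum_congr rfl fun i hi => ?_
      rw [erase_insert_of_ne (ne_of_mem_of_not_mem hi ha).symm,
        prod_insert fun h => ha (mem_of_mem_erase h)]
    rw [prod_insert ha, prod_insert ha, sum_insert ha, erase_insert ha, hsum]
    exact ⟨∑ i ∈ s, ∏ j ∈ s.erase i, f j + (f a + x) * d, by linear_combination (f a + x) * hd⟩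

theorem Nat.cast_descFactorial_eq_prod_range {R : Type*} [CommRing R] (n k : ℕ) :
    (n.descFactorial k : R) = ∏ j ∈ range k, ((n : R) - j) := by
  rw [← descPochhammer_eval_eq_descFactorial, descPochhammer_eval_eq_prod_range]

theorem Nat.neg_one_pow_mul_choose_mul_factorial {R : Type*} [CommRing R] (n k : ℕ) :
    (-1) ^ k * (n.choose k * k ! : R) = ∏ j ∈ range k, ((j : R) + 1 - (n + 1)) := by
  have h : ∏ j ∈ range k, ((j : R) + 1 - (n + 1)) = ∏ j ∈ range k, -((n : R) - j) :=
    prod_congr rfl fun _ _ => by ring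
  rw [h, prod_neg, card_range, ← cast_descFactorial_eq_prod_range,
    descFactorial_eq_factorial_mul_choose]
  push_cast
  ring

theorem sum_prod_erase_range_add_one (k : ℕ) :
    ∑ i ∈ range k, ∏ j ∈ (range k).erase i, ((j : ℚ) + 1) = k ! * H k := by
  have hfac : (k ! : ℚ) = ∏ j ∈ range k, ((j : ℚ) + 1) := by
    rw [← prod_range_add_one_eq_factorial]; push_cast; rfl
  rw [H, mul_sum, hfac]
  refine sum_congr rfl fun i hi => ?_
  rw [← mul_prod_erase _ _ hi]
  field_simp

theorem sq_dvd_neg_one_pow_mul_choose_mul_factorial_sub (n k : ℕ) :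
    ((n : ℤ) + 1) ^ 2 ∣ (-1) ^ k * (n.choose k * k ! : ℤ) -
      ((k ! : ℤ) - (n + 1) * ∑ i ∈ range k, ∏ j ∈ (range k).erase i, ((j : ℤ) + 1)) := by
  have h := (range k).sq_dvd_prod_add_sub (fun j => (j : ℤ) + 1) (-((n : ℤ) + 1))
  rw [neg_sq] at h
  rw [neg_one_pow_mul_choose_mul_factorial, ← prod_range_add_one_eq_factorial]
  push_cast
  simpa only [sub_eq_add_neg, neg_mul] using h

theorem ratCongr.mul_left {p m : ℕ} {a b : ℚ} (c : ℤ) (h : ratCongr p m a b) :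
    ratCongr p m (c * a) (c * b) := by
  obtain ⟨s, t, hpt, hst⟩ := h
  exact ⟨c * s, t, hpt, by push_cast; linear_combination c * hst⟩

theorem ratCongr_neg_one_pow_mul_choose_pred {p k : ℕ} (hp : p.Prime) (hk : k < p) :
    ratCongr p 2 ((-1) ^ k * (p - 1).choose k) (1 - p * H k) := by
  obtain ⟨n, rfl⟩ : ∃ n, p = n + 1 := ⟨p - 1, by have := hp.one_lt; omega⟩
  obtain ⟨d, hd⟩ := sq_dvd_neg_one_pow_mul_choose_mul_factorial_sub n k
  refine ⟨d, k !, ?_, ?_⟩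
  · rw [Int.natCast_dvd_natCast, hp.dvd_factorial]
    omega
  · have hq := congrArg (fun z : ℤ => (z : ℚ)) hd
    push_cast at hq ⊢
    rw [sum_prod_erase_range_add_one] at hq
    linear_combination hq

theorem central_binom_mul_choose_pred_general (p k : ℕ) (hp : p.Prime)
    (hk : k ≤ p - 1) :
    ratCongr p 2
      ((-1 : ℚ) ^ k * ((2 * k).choose k : ℚ) * ((p - 1).choose k : ℚ))
      (((2 * k).choose k : ℚ) * (1 - p * H k)) := by
  have h := (ratCongr_neg_one_pow_mul_choose_pred hp (Nat.lt_of_le_pred hp.pos hk)).mul_left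
    ((2 * k).choose k)
  rwa [Int.cast_natCast, mul_left_comm, ← mul_assoc] at h

theorem central_binom_mul_choose_pred (p k : ℕ) (hp : p.Prime) (hp5 : 5 ≤ p)
    (hk : k ≤ p - 1) :
    ratCongr p 2
      ((-1 : ℚ) ^ k * ((2 * k).choose k : ℚ) * ((p - 1).choose k : ℚ))
      (((2 * k).choose k : ℚ) * (1 - p * H k)) :=
  central_binom_mul_choose_pred_general p k hp hk
end

section
/- Let p ≥ 5 be a prime and let k be an integer with 0 ≤ k ≤ p-1. Then C(2k,k)·C(p-1,2k) ≡ C(2k,k)·(1 - p·H_{2k}) (mod p²), as a congruence of rational numbers. -/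
/-!
For `n ≤ p - 1`, `C(p-1, n) = ∏_{j=1}^n (p - j)/j = (-1)^n ∏_{j=1}^n (1 - p/j)`, and expanding the
product modulo `p²` leaves `(-1)^n (1 - p H_n)`; for even `n = 2k` the sign disappears.
When `2k ≥ p` instead, `C(p-1, 2k) = 0`, `p ∣ C(2k, k)`, and `p H_{2k} = 1 + p d` with `d`
`p`-integral (only the term `1/p` of `H_{2k}` is not), so both sides vanish modulo `p²`.
-/

open Finset

def pIntegers (p : ℕ) [Fact p.Prime] : Subring ℚ where
  carrier := {q | ¬ p ∣ q.den}
  mul_mem' {a b} ha hb h :=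
    ((Fact.out : p.Prime).dvd_mul.1 (h.trans (Rat.mul_den_dvd a b))).elim ha hb
  one_mem' := Nat.Prime.not_dvd_one Fact.out
  add_mem' {a b} ha hb h :=
    ((Fact.out : p.Prime).dvd_mul.1 (h.trans (Rat.add_den_dvd a b))).elim ha hb
  zero_mem' := Nat.Prime.not_dvd_one Fact.out
  neg_mem' {a} ha := by rwa [Set.mem_ofPred, Rat.neg_den]

section pIntegers

variable {p : ℕ} [Fact p.Prime]

theorem one_div_natCast_add_one_mem_pIntegers {j : ℕ} (hj : ¬ p ∣ j + 1) :
    1 / ((j : ℚ) + 1) ∈ pIntegers p := by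
  change ¬ p ∣ (1 / ((j : ℚ) + 1)).den
  rwa [one_div, ← Nat.cast_succ, Rat.inv_natCast_den, if_neg j.succ_ne_zero]

theorem sum_one_div_mem_pIntegers {s : Finset ℕ} (hs : ∀ j ∈ s, ¬ p ∣ j + 1) :
    ∑ j ∈ s, 1 / ((j : ℚ) + 1) ∈ pIntegers p :=
  Subring.sum_mem _ fun j hj => one_div_natCast_add_one_mem_pIntegers (hs j hj)

theorem ratCongr_of_sub_eq_mul {m : ℕ} {a b c : ℚ} (hc : c ∈ pIntegers p)
    (h : a - b = (p : ℚ) ^ m * c) : ratCongr p m a b :=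
  ⟨c.num, c.den, by exact_mod_cast hc, by rw [h, mul_assoc, Int.cast_natCast, Rat.mul_den_eq_num]⟩

end pIntegers

theorem exists_prod_one_add_mul_eq {R ι : Type*} [CommRing R] (S : Subring R) (s : Finset ι)
    {a : R} (ha : a ∈ S) {x : ι → R} (hx : ∀ i ∈ s, x i ∈ S) :
    ∃ c ∈ S, ∏ i ∈ s, (1 + a * x i) = 1 + a * ∑ i ∈ s, x i + a ^ 2 * c := by
  classical
  induction s using Finset.induction_on with
  | empty => exact ⟨0, S.zero_mem, by simp⟩
  | insert i s hi ih =>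
    obtain ⟨c, hc, e⟩ := ih fun j hj => hx j (mem_insert_of_mem hj)
    have hxi := hx i (mem_insert_self i s)
    refine ⟨x i * ∑ j ∈ s, x j + c + a * x i * c, ?_, ?_⟩
    · have hsum := S.sum_mem fun j hj => hx j (mem_insert_of_mem hj)
      exact S.add_mem (S.add_mem (S.mul_mem hxi hsum) hc) (S.mul_mem (S.mul_mem ha hxi) hc)
    · rw [prod_insert hi, sum_insert hi, e]
      ring

theorem cast_choose_eq_prod_range {K : Type*} [Field K] [CharZero K] {m n : ℕ} (h : n ≤ m) :
    (m.choose n : K) = ∏ j ∈ range n, ((m : K) - j) / (j + 1) := by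
  have hfac : ∏ j ∈ range n, ((j : K) + 1) ≠ 0 :=
    prod_ne_zero_iff.2 fun j _ => j.cast_add_one_ne_zero
  rw [prod_div_distrib, eq_div_iff hfac]
  have := congrArg (Nat.cast : ℕ → K) (Nat.descFactorial_eq_factorial_mul_choose m n)
  rw [Nat.descFactorial_eq_prod_range, ← prod_range_add_one_eq_factorial] at this
  push_cast at this
  rw [mul_comm, ← this]
  exact prod_congr rfl fun j hj => Nat.cast_sub (by simp only [mem_range] at hj; omega)

theorem exists_choose_pred_eq {p n : ℕ} [Fact p.Prime] (hn : n ≤ p - 1) :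
    ∃ c ∈ pIntegers p, ((p - 1).choose n : ℚ) = (-1) ^ n * (1 - p * H n) + (p : ℚ) ^ 2 * c := by
  have hp : 1 ≤ p := (Fact.out : p.Prime).one_lt.le
  obtain ⟨c, hc, e⟩ := exists_prod_one_add_mul_eq (pIntegers p) (range n)
    (natCast_mem _ p) (x := fun j => -(1 / ((j : ℚ) + 1)))
    fun j hj => Subring.neg_mem _ <| one_div_natCast_add_one_mem_pIntegers fun hdvd =>
      absurd (Nat.le_of_dvd j.succ_pos hdvd) (by simp only [mem_range] at hj; omega)
  refine ⟨(-1) ^ n * c, mul_mem (pow_mem (neg_mem (one_mem _)) n) hc, ?_⟩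
  have hfactor : ∀ j ∈ range n,
      (((p - 1 : ℕ) : ℚ) - j) / (j + 1) = -(1 + p * -(1 / ((j : ℚ) + 1))) := by
    intro j _
    rw [Nat.cast_sub hp]
    field_simp
    ring
  rw [cast_choose_eq_prod_range hn, prod_congr rfl hfactor, prod_neg, card_range, e, sum_neg_distrib]
  simp only [H]
  ring

theorem exists_H_eq_inv_add {p n : ℕ} [Fact p.Prime] (hpn : p ≤ n) (hn : n < 2 * p) :
    ∃ d ∈ pIntegers p, H n = 1 / p + d := by
  have hp : 1 ≤ p := (Fact.out : p.Prime).one_lt.le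
  have hmem : p - 1 ∈ range n := mem_range.2 (by omega)
  refine ⟨_, sum_one_div_mem_pIntegers (s := (range n).erase (p - 1)) fun j hj hdvd => ?_, ?_⟩
  · rw [mem_erase, mem_range] at hj
    have := Nat.eq_of_dvd_of_lt_two_mul j.succ_ne_zero hdvd (by omega)
    omega
  · rw [H, ← add_sum_erase _ _ hmem, Nat.cast_sub hp]
    norm_num

theorem central_binom_mul_choose_pred_two_general (p k : ℕ) (hp : p.Prime)
    (hk : k ≤ p - 1) :
    ratCongr p 2
      (((2 * k).choose k : ℚ) * ((p - 1).choose (2 * k) : ℚ))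
      (((2 * k).choose k : ℚ) * (1 - p * H (2 * k))) := by
  have := Fact.mk hp
  rcases le_or_gt (2 * k) (p - 1) with h2k | h2k
  · obtain ⟨c, hc, e⟩ := exists_choose_pred_eq (p := p) h2k
    refine ratCongr_of_sub_eq_mul (mul_mem (natCast_mem _ ((2 * k).choose k)) hc) ?_
    rw [e, pow_mul, neg_one_sq, one_pow]
    ring
  · have hchoose : (p - 1).choose (2 * k) = 0 := Nat.choose_eq_zero_of_lt h2k
    obtain ⟨m, hm⟩ : p ∣ (2 * k).choose k := by
      simpa [two_mul] using hp.dvd_choose_add (a := k) (b := k) (by omega) (by omega) (by omega)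
    obtain ⟨d, hd, hH⟩ := exists_H_eq_inv_add (p := p) (n := 2 * k) (by omega) (by omega)
    refine ratCongr_of_sub_eq_mul (mul_mem (natCast_mem _ m) hd) ?_
    have hp0 : (p : ℚ) ≠ 0 := by exact_mod_cast hp.ne_zero
    rw [hchoose, hm, hH]
    push_cast
    field_simp
    ring

theorem central_binom_mul_choose_pred_two (p k : ℕ) (hp : p.Prime) (hp5 : 5 ≤ p)
    (hk : k ≤ p - 1) :
    ratCongr p 2
      (((2 * k).choose k : ℚ) * ((p - 1).choose (2 * k) : ℚ))
      (((2 * k).choose k : ℚ) * (1 - p * H (2 * k))) :=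
  central_binom_mul_choose_pred_two_general p k hp hk
end

section
/- Let p ≥ 5 be a prime. Then (1/(p+1))·∑_{k=0}^{p} (-1)^k·C(p+1,k+1)·C(2k,k) ≡ -1 + 2p + p·∑_{k=1}^{p-1} ((-1)^k/(k(k+1)))·C(p-1,k-1)·C(2k,k) (mod p²), as a congruence of rational numbers. -/
open Finset

theorem Nat.Prime.choose_two_mul_modEq_two {p : ℕ} (hp : p.Prime) :
    (2 * p).choose p ≡ 2 [MOD p ^ 2] := by
  obtain ⟨q, rfl⟩ : ∃ q, p = q + 1 := Nat.exists_eq_add_one.mpr hp.pos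
  have hsplit : (2 * (q + 1)).choose (q + 1) =
      ∑ i ∈ range q, (q + 1).choose (i + 1) ^ 2 + 2 := by
    rw [← Nat.sum_range_choose_sq, sum_range_succ, sum_range_succ']
    simp only [Nat.choose_self, Nat.choose_zero_right]
    ring
  have hmiddle : (q + 1) ^ 2 ∣ ∑ i ∈ range q, (q + 1).choose (i + 1) ^ 2 :=
    dvd_sum fun i hi =>
      pow_dvd_pow_of_dvd (hp.dvd_choose_self i.succ_ne_zero (by simpa using hi)) 2
  rw [hsplit]
  simpa using (Nat.modEq_zero_iff_dvd.mpr hmiddle).add_right 2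

theorem Nat.choose_add_two_mul (n k : ℕ) :
    (n + 2).choose (k + 2) * ((k + 1) * (k + 2)) = (n + 2) * (n + 1) * n.choose k := by
  linear_combination (k + 1) * (Nat.add_one_mul_choose_eq (n + 1) (k + 1)).symm +
    (n + 2) * (Nat.add_one_mul_choose_eq n k).symm

theorem Nat.cast_choose_add_one_div (n : ℕ) {k : ℕ} (hk : 1 ≤ k) :
    ((n + 1).choose (k + 1) : ℚ) / (n + 1) = n * (n - 1).choose (k - 1) / (k * (k + 1)) := by
  obtain ⟨j, rfl⟩ := Nat.exists_eq_add_of_le' hk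
  rcases n with _ | m
  · simp [Nat.choose_eq_zero_of_lt]
  have h : ((m + 2).choose (j + 2) : ℚ) * ((j + 1) * (j + 2)) =
      (m + 2) * (m + 1) * m.choose j := by
    exact_mod_cast Nat.choose_add_two_mul m j
  simp only [Nat.add_sub_cancel]
  field_simp
  push_cast
  linear_combination h

theorem Finset.sum_range_add_one_eq_add_sum_Icc_add {M : Type*} [AddCommMonoid M]
    (f : ℕ → M) {n : ℕ} (hn : 1 ≤ n) :
    ∑ k ∈ range (n + 1), f k = f 0 + ∑ k ∈ Icc 1 (n - 1), f k + f n := by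
  obtain ⟨m, rfl⟩ := Nat.exists_eq_add_of_le' hn
  rw [sum_range_succ, range_eq_Ico, sum_eq_sum_Ico_succ_bot (by omega), Nat.add_sub_cancel,
    Ico_add_one_right_eq_Icc]

theorem alternating_sum_choose_mul_centralBinom {n : ℕ} (hn : 1 ≤ n) :
    (1 / (n + 1 : ℚ)) * ∑ k ∈ range (n + 1),
        (-1 : ℚ) ^ k * ((n + 1).choose (k + 1) : ℚ) * ((2 * k).choose k : ℚ) =
      1 + (-1 : ℚ) ^ n * (2 * n).choose n / (n + 1) + n * ∑ k ∈ Icc 1 (n - 1),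
        ((-1 : ℚ) ^ k / (k * (k + 1))) * ((n - 1).choose (k - 1) : ℚ) *
          ((2 * k).choose k : ℚ) := by
  have hinner : ∀ k ∈ Icc 1 (n - 1), (1 / (n + 1 : ℚ)) *
      ((-1 : ℚ) ^ k * ((n + 1).choose (k + 1) : ℚ) * ((2 * k).choose k : ℚ)) =
      n * (((-1 : ℚ) ^ k / (k * (k + 1))) * ((n - 1).choose (k - 1) : ℚ) *
        ((2 * k).choose k : ℚ)) := fun k hk => by
    calc _ = (-1 : ℚ) ^ k * (2 * k).choose k * ((n + 1).choose (k + 1) / (n + 1)) := by ring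
      _ = _ := by rw [Nat.cast_choose_add_one_div n (mem_Icc.mp hk).1]; ring
  rw [sum_range_add_one_eq_add_sum_Icc_add _ hn, mul_add, mul_add, mul_sum,
    sum_congr rfl hinner, ← mul_sum]
  simp only [pow_zero, zero_add, Nat.choose_one_right, mul_zero, Nat.choose_self]
  push_cast
  field_simp
  ring

theorem alternating_sum_congruence (p : ℕ) (hp : p.Prime) (hp5 : 5 ≤ p) :
    ratCongr p 2
      ((1 / (p + 1 : ℚ)) * ∑ k ∈ Finset.range (p + 1),
        (-1 : ℚ) ^ k * ((p + 1).choose (k + 1) : ℚ) * ((2 * k).choose k : ℚ))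
      (-1 + 2 * p + p * ∑ k ∈ Finset.Icc 1 (p - 1),
        ((-1 : ℚ) ^ k / (k * (k + 1))) * ((p - 1).choose (k - 1) : ℚ) *
          ((2 * k).choose k : ℚ)) := by
  have hodd : Odd p := hp.odd_of_ne_two (by omega)
  obtain ⟨m, hm⟩ := hp.choose_two_mul_modEq_two.symm.dvd
  have hm' : ((2 * p).choose p : ℚ) - 2 = p ^ 2 * m := by exact_mod_cast hm
  refine ⟨-m - 2, p + 1, ?_, ?_⟩
  · exact fun h => hp.not_dvd_one (by exact_mod_cast (dvd_add_right (dvd_refl _)).mp h)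
  · rw [alternating_sum_choose_mul_centralBinom hp.one_lt.le, hodd.neg_one_pow]
    push_cast
    field_simp
    linear_combination -hm'
end
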